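/- arXiv:hep-th/9703019 — 8 statements merged into one kernel-verified Lean document; each statement's English description precedes it below -/
import Mathlib

section
/- On R^n, the linear n−1 tensor η_{i_1...i_{n-1}}(x) = ε_{i_1...i_{n-1} i_n} x^{i_n} satisfies the Nambu differential condition and the algebraic condition Σ = 0, hence defines a Nambu-Poisson structure of order n−1. -/
/-- The Levi-Civita symbol `ε_{i₁...i_n}` on `n` indices. -/
noncomputable def levicivita {n : ℕ} (idx : Fin n → Fin n) : ℤ :=
  if h : Function.Bijective idx then (Equiv.Perm.sign (Equiv.ofBijective idx h) : ℤ) else 0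

/-- The partial derivative `∂^ρ f`. -/
noncomputable def pd {d : ℕ} (ρ : Fin d) (f : (Fin d → ℝ) → ℝ) : (Fin d → ℝ) → ℝ :=
  fun x => fderiv ℝ f x (Pi.single ρ 1)

/-- The linear tensor `η_{i₁...i_{n-1}}(x) = ε_{i₁...i_{n-1} i_n} x^{i_n}` of order `n-1 = m+1`
on `ℝ^n` with `n = m+2`. -/
noncomputable def linNambu (m : ℕ) (idx : Fin (m + 1) → Fin (m + 2)) (x : Fin (m + 2) → ℝ) : ℝ :=
  ∑ k : Fin (m + 2), (levicivita (Fin.snoc idx k) : ℝ) * x k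

section NambuAux
open Function Finset

lemma levicivita_eq_zero {n : ℕ} {f : Fin n → Fin n} (h : ¬ Function.Injective f) :
    levicivita f = 0 := by
  rw [levicivita, dif_neg fun hb => h hb.1]

lemma levicivita_comp {n : ℕ} (f : Fin n → Fin n) (σ : Equiv.Perm (Fin n)) :
    levicivita (f ∘ σ) = Equiv.Perm.sign σ * levicivita f := by
  by_cases h : Function.Bijective f
  · have h2 : Function.Bijective (f ∘ σ) := h.comp σ.bijective
    have he : Equiv.ofBijective (f ∘ σ) h2 = Equiv.ofBijective f h * σ := by
      ext t; rfl
    rw [levicivita, levicivita, dif_pos h, dif_pos h2, he, map_mul]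
    push_cast
    ring
  · have h2 : ¬ Function.Bijective (f ∘ σ) := by
      intro h2
      have : Function.Bijective ((f ∘ σ) ∘ (σ.symm : Fin n → Fin n)) := h2.comp σ.symm.bijective
      have he : (f ∘ σ) ∘ (σ.symm : Fin n → Fin n) = f := by funext s; simp
      rw [he] at this
      exact h this
    rw [levicivita, levicivita, dif_neg h, dif_neg h2, mul_zero]

lemma levicivita_swap {n : ℕ} (f : Fin n → Fin n) {s t : Fin n} (h : s ≠ t) :
    levicivita (f ∘ Equiv.swap s t) = - levicivita f := by
  rw [levicivita_comp, Equiv.Perm.sign_swap h]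
  push_cast
  ring

/-- Key expansion identity: `x_a ε_b = ∑_t x_{b_t} ε_{b[t↦a]}`. -/
lemma lc_star {n : ℕ} (b : Fin n → Fin n) (a : Fin n) (x : Fin n → ℝ) :
    x a * (levicivita b : ℝ) =
      ∑ t : Fin n, x (b t) * (levicivita (Function.update b t a) : ℝ) := by
  by_cases hb : Function.Bijective b
  · obtain ⟨t₀, ht₀⟩ := hb.surjective a
    rw [Finset.sum_eq_single t₀]
    · rw [ht₀, show Function.update b t₀ a = b by rw [← ht₀, Function.update_eq_self]]
    · intro t _ hne
      have hni : ¬ Function.Injective (Function.update b t a) := by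
        intro hinj
        have h1 : Function.update b t a t = Function.update b t a t₀ := by
          rw [Function.update_self, Function.update_of_ne (Ne.symm hne), ht₀]
        exact hne (hinj h1)
      rw [levicivita_eq_zero hni]
      push_cast
      ring
    · intro h; exact absurd (Finset.mem_univ t₀) h
  · have hni : ¬ Function.Injective b := fun h => hb (Finite.injective_iff_bijective.mp h)
    obtain ⟨t₁, t₂, heq, hne⟩ := Function.not_injective_iff.mp hni
    rw [levicivita_eq_zero hni]
    have hout : ∀ t ∈ (Finset.univ : Finset (Fin n)), t ∉ ({t₁, t₂} : Finset (Fin n)) →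
        x (b t) * (levicivita (Function.update b t a) : ℝ) = 0 := by
      intro t _ ht
      simp only [Finset.mem_insert, Finset.mem_singleton, not_or] at ht
      have hni2 : ¬ Function.Injective (Function.update b t a) := by
        intro hinj
        have h1 : Function.update b t a t₁ = Function.update b t a t₂ := by
          rw [Function.update_of_ne (Ne.symm ht.1), Function.update_of_ne (Ne.symm ht.2), heq]
        exact hne (hinj h1)
      rw [levicivita_eq_zero hni2]
      push_cast
      ring
    rw [← Finset.sum_subset (Finset.subset_univ ({t₁, t₂} : Finset (Fin n))) hout,
      Finset.sum_pair hne]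
    have hcomp : Function.update b t₂ a = (Function.update b t₁ a) ∘ (Equiv.swap t₁ t₂) := by
      funext s
      rcases eq_or_ne s t₁ with rfl | h1
      · rw [Function.update_of_ne hne, comp_apply, Equiv.swap_apply_left, Function.update_of_ne (Ne.symm hne),
          heq]
      rcases eq_or_ne s t₂ with rfl | h2
      · rw [Function.update_self, comp_apply, Equiv.swap_apply_right, Function.update_self]
      · rw [Function.update_of_ne h2, comp_apply, Equiv.swap_apply_of_ne_of_ne h1 h2,
          Function.update_of_ne h1]
    rw [hcomp, levicivita_swap _ hne, heq]
    push_cast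
    ring

/-- Sylvester/Plücker exchange identity for the Levi-Civita symbol. -/
lemma lc_exchange {n : ℕ} (A B : Fin n → Fin n) (p : Fin n) :
    (levicivita A : ℝ) * levicivita B =
      ∑ t : Fin n, (levicivita (Function.update A p (B t)) : ℝ) *
        (levicivita (Function.update B t (A p)) : ℝ) := by
  have h := lc_star B (A p) (fun c => (levicivita (Function.update A p c) : ℝ))
  simpa [Function.update_eq_self] using h

/-- `update (snoc f c) last ρ = snoc f ρ`. -/
lemma update_snoc_last {m : ℕ} (f : Fin (m + 1) → Fin (m + 2)) (c ρ : Fin (m + 2)) :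
    Function.update (Fin.snoc f c : Fin (m + 2) → Fin (m + 2)) (Fin.last (m + 1)) ρ = Fin.snoc f ρ := by
  funext s
  refine Fin.lastCases ?_ (fun t => ?_) s
  · rw [Function.update_self, Fin.snoc_last]
  · rw [Function.update_of_ne (Fin.castSucc_lt_last t).ne, Fin.snoc_castSucc, Fin.snoc_castSucc]

/-- `snoc (update f k v) c = update (snoc f c) k.castSucc v`. -/
lemma snoc_update {m : ℕ} (f : Fin (m + 1) → Fin (m + 2)) (k : Fin (m + 1))
    (v c : Fin (m + 2)) :
    (Fin.snoc (Function.update f k v) c : Fin (m + 2) → Fin (m + 2)) = Function.update (Fin.snoc f c : Fin (m + 2) → Fin (m + 2)) k.castSucc v := by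
  funext s
  refine Fin.lastCases ?_ (fun t => ?_) s
  · rw [Fin.snoc_last, Function.update_of_ne (Fin.castSucc_lt_last k).ne', Fin.snoc_last]
  · rcases eq_or_ne t k with rfl | ht
    · rw [Fin.snoc_castSucc, Function.update_self, Function.update_self]
    · rw [Fin.snoc_castSucc, Function.update_of_ne ht,
        Function.update_of_ne (fun h => ht (Fin.castSucc_injective _ h)), Fin.snoc_castSucc]

/-- Antisymmetry: `ε(snoc (f[k↦ρ]) a) = - ε(snoc (f[k↦a]) ρ)`. -/
lemma lc_snoc_swap {m : ℕ} (f : Fin (m + 1) → Fin (m + 2)) (k : Fin (m + 1))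
    (ρ a : Fin (m + 2)) :
    (levicivita (Fin.snoc (Function.update f k ρ) a) : ℤ) =
      - levicivita (Fin.snoc (Function.update f k a) ρ) := by
  have hne : k.castSucc ≠ Fin.last (m + 1) := (Fin.castSucc_lt_last k).ne
  have hcomp : Fin.snoc (Function.update f k ρ) a =
      (Fin.snoc (Function.update f k a) ρ) ∘ (Equiv.swap k.castSucc (Fin.last (m + 1))) := by
    funext s
    refine Fin.lastCases ?_ (fun t => ?_) s
    · rw [Fin.snoc_last, comp_apply, Equiv.swap_apply_right, Fin.snoc_castSucc,
        Function.update_self]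
    · rcases eq_or_ne t k with rfl | ht
      · rw [Fin.snoc_castSucc, Function.update_self, comp_apply, Equiv.swap_apply_left,
          Fin.snoc_last]
      · have h1 : t.castSucc ≠ k.castSucc := fun h => ht (Fin.castSucc_injective _ h)
        rw [Fin.snoc_castSucc, Function.update_of_ne ht, comp_apply,
          Equiv.swap_apply_of_ne_of_ne h1 (Fin.castSucc_lt_last t).ne, Fin.snoc_castSucc,
          Function.update_of_ne ht]
  rw [hcomp, levicivita_swap _ hne]

/-- The partial derivative of `linNambu`. -/
lemma pd_linNambu {m : ℕ} (j : Fin (m + 1) → Fin (m + 2)) (ρ : Fin (m + 2))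
    (x : Fin (m + 2) → ℝ) :
    pd ρ (linNambu m j) x = (levicivita (Fin.snoc j ρ) : ℝ) := by
  set L : (Fin (m + 2) → ℝ) →L[ℝ] ℝ :=
    ∑ k : Fin (m + 2), (levicivita (Fin.snoc j k) : ℝ) •
      (ContinuousLinearMap.proj k : (Fin (m + 2) → ℝ) →L[ℝ] ℝ) with hLdef
  have hfun : linNambu m j = ⇑L := by
    funext y
    simp [linNambu, hLdef, ContinuousLinearMap.sum_apply, smul_eq_mul]
  rw [pd, hfun, L.fderiv]
  simp [hLdef, ContinuousLinearMap.sum_apply, smul_eq_mul, Pi.single_apply, mul_ite,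
    mul_one, mul_zero]

/-- The coefficient `ε_{f₁...f_{m+1} a}` as a real number. -/
noncomputable def lcC {m : ℕ} (f : Fin (m + 1) → Fin (m + 2)) (a : Fin (m + 2)) : ℝ :=
  (levicivita (Fin.snoc f a) : ℝ)

lemma linNambu_eq {m : ℕ} (f : Fin (m + 1) → Fin (m + 2)) (x : Fin (m + 2) → ℝ) :
    linNambu m f x = ∑ a : Fin (m + 2), lcC f a * x a := rfl

lemma lcC_swap {m : ℕ} (f : Fin (m + 1) → Fin (m + 2)) (k : Fin (m + 1)) (ρ a : Fin (m + 2)) :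
    lcC (Function.update f k ρ) a = - lcC (Function.update f k a) ρ := by
  unfold lcC
  exact_mod_cast congrArg (fun z : ℤ => (z : ℝ)) (lc_snoc_swap f k ρ a)

/-- Repeated entry makes the symbol vanish. -/
lemma lcC_update_last_self {m : ℕ} (f : Fin (m + 1) → Fin (m + 2)) (ρ : Fin (m + 2)) :
    lcC (Function.update f (Fin.last m) ρ) ρ = 0 := by
  unfold lcC
  rw [levicivita_eq_zero, Int.cast_zero]
  intro hinj
  have h1 : (Fin.snoc (Function.update f (Fin.last m) ρ) ρ : Fin (m + 2) → Fin (m + 2))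
      ((Fin.last m).castSucc) =
      (Fin.snoc (Function.update f (Fin.last m) ρ) ρ : Fin (m + 2) → Fin (m + 2))
      (Fin.last (m + 1)) := by
    rw [Fin.snoc_castSucc, Function.update_self, Fin.snoc_last]
  exact (Fin.castSucc_lt_last (Fin.last m)).ne (hinj h1)

/-- The key exchange identity specialized to the `snoc` coefficients. -/
lemma key_exchange {m : ℕ} (f g : Fin (m + 1) → Fin (m + 2)) (a b : Fin (m + 2)) :
    lcC f a * lcC g b =
      (∑ k : Fin (m + 1),
        lcC (Function.update f (Fin.last m) (g k)) a *
          lcC (Function.update g k (f (Fin.last m))) b)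
      + lcC (Function.update f (Fin.last m) b) a * lcC g (f (Fin.last m)) := by
  have h := lc_exchange (Fin.snoc f a) (Fin.snoc g b) ((Fin.last m).castSucc)
  rw [Fin.sum_univ_castSucc] at h
  simp only [Fin.snoc_castSucc, Fin.snoc_last, ← snoc_update, update_snoc_last] at h
  exact h

lemma algebraic_cond {m : ℕ} (i j : Fin (m + 1) → Fin (m + 2)) (x : Fin (m + 2) → ℝ) :
    linNambu m i x * linNambu m j x =
      ∑ k : Fin (m + 1),
        linNambu m (Function.update i (Fin.last m) (j k)) x *
          linNambu m (Function.update j k (i (Fin.last m))) x := by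
  have expand : ∀ f g : Fin (m + 1) → Fin (m + 2),
      linNambu m f x * linNambu m g x =
        ∑ a : Fin (m + 2), ∑ b : Fin (m + 2), (lcC f a * lcC g b) * (x a * x b) := by
    intro f g
    rw [linNambu_eq, linNambu_eq, Finset.sum_mul_sum]
    exact Finset.sum_congr rfl fun a _ => Finset.sum_congr rfl fun b _ => by ring
  have S0 : ∑ a : Fin (m + 2), ∑ b : Fin (m + 2),
      (lcC (Function.update i (Fin.last m) b) a * lcC j (i (Fin.last m))) * (x a * x b) = 0 := by
    set E : Fin (m + 2) → Fin (m + 2) → ℝ := fun a b =>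
      (lcC (Function.update i (Fin.last m) b) a * lcC j (i (Fin.last m))) * (x a * x b) with hE
    have anti : ∀ a b, E a b = - E b a := by
      intro a b
      simp only [hE]
      rw [lcC_swap]
      ring
    have h1 : ∑ a, ∑ b, E a b = - ∑ a, ∑ b, E a b := by
      conv_lhs => rw [Finset.sum_comm]
      rw [← Finset.sum_neg_distrib]
      refine Finset.sum_congr rfl fun b _ => ?_
      rw [← Finset.sum_neg_distrib]
      exact Finset.sum_congr rfl fun a _ => anti a b
    linarith
  calc linNambu m i x * linNambu m j x
      = ∑ a : Fin (m + 2), ∑ b : Fin (m + 2), (lcC i a * lcC j b) * (x a * x b) := expand i j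
    _ = ∑ a : Fin (m + 2), ∑ b : Fin (m + 2),
          ((∑ k : Fin (m + 1),
              (lcC (Function.update i (Fin.last m) (j k)) a *
                lcC (Function.update j k (i (Fin.last m))) b) * (x a * x b))
            + (lcC (Function.update i (Fin.last m) b) a * lcC j (i (Fin.last m)))
                * (x a * x b)) := by
        refine Finset.sum_congr rfl fun a _ => Finset.sum_congr rfl fun b _ => ?_
        rw [key_exchange, add_mul, Finset.sum_mul]
    _ = (∑ a : Fin (m + 2), ∑ b : Fin (m + 2), ∑ k : Fin (m + 1),
          (lcC (Function.update i (Fin.last m) (j k)) a *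
            lcC (Function.update j k (i (Fin.last m))) b) * (x a * x b))
        + ∑ a : Fin (m + 2), ∑ b : Fin (m + 2),
            (lcC (Function.update i (Fin.last m) b) a * lcC j (i (Fin.last m)))
              * (x a * x b) := by
        rw [← Finset.sum_add_distrib]
        refine Finset.sum_congr rfl fun a _ => ?_
        rw [← Finset.sum_add_distrib]
    _ = ∑ k : Fin (m + 1), ∑ a : Fin (m + 2), ∑ b : Fin (m + 2),
          (lcC (Function.update i (Fin.last m) (j k)) a *
            lcC (Function.update j k (i (Fin.last m))) b) * (x a * x b) := by
        rw [S0, add_zero]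
        rw [show (∑ a : Fin (m + 2), ∑ b : Fin (m + 2), ∑ k : Fin (m + 1),
          (lcC (Function.update i (Fin.last m) (j k)) a *
            lcC (Function.update j k (i (Fin.last m))) b) * (x a * x b))
          = ∑ a : Fin (m + 2), ∑ k : Fin (m + 1), ∑ b : Fin (m + 2),
          (lcC (Function.update i (Fin.last m) (j k)) a *
            lcC (Function.update j k (i (Fin.last m))) b) * (x a * x b)
          from Finset.sum_congr rfl fun a _ => Finset.sum_comm, Finset.sum_comm]
    _ = ∑ k : Fin (m + 1),
        linNambu m (Function.update i (Fin.last m) (j k)) x *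
          linNambu m (Function.update j k (i (Fin.last m))) x := by
        exact Finset.sum_congr rfl fun k _ => (expand _ _).symm

lemma differential_cond {m : ℕ} (i j : Fin (m + 1) → Fin (m + 2)) (x : Fin (m + 2) → ℝ) :
    ∑ ρ : Fin (m + 2),
        linNambu m (Function.update i (Fin.last m) ρ) x * pd ρ (linNambu m j) x =
      ∑ k : Fin (m + 1), ∑ ρ : Fin (m + 2),
        pd ρ (linNambu m (Function.update i (Fin.last m) (j k))) x *
          linNambu m (Function.update j k ρ) x := by
  have hpd : ∀ (g : Fin (m + 1) → Fin (m + 2)) (ρ : Fin (m + 2)),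
      pd ρ (linNambu m g) x = lcC g ρ := fun g ρ => pd_linNambu g ρ x
  simp only [hpd]
  have coeff : ∀ a : Fin (m + 2),
      ∑ ρ : Fin (m + 2), lcC (Function.update i (Fin.last m) ρ) a * lcC j ρ =
        ∑ k : Fin (m + 1), ∑ ρ : Fin (m + 2),
          lcC (Function.update i (Fin.last m) (j k)) ρ * lcC (Function.update j k ρ) a := by
    intro a
    have lhs1 : ∑ ρ : Fin (m + 2), lcC (Function.update i (Fin.last m) ρ) a * lcC j ρ =
        - ∑ ρ : Fin (m + 2), lcC (Function.update i (Fin.last m) a) ρ * lcC j ρ := by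
      rw [← Finset.sum_neg_distrib]
      refine Finset.sum_congr rfl fun ρ _ => ?_
      rw [lcC_swap]
      ring
    have rhs1 : ∀ k : Fin (m + 1),
        ∑ ρ : Fin (m + 2),
            lcC (Function.update i (Fin.last m) (j k)) ρ * lcC (Function.update j k ρ) a =
          - ∑ ρ : Fin (m + 2),
            lcC (Function.update i (Fin.last m) (j k)) ρ * lcC (Function.update j k a) ρ := by
      intro k
      rw [← Finset.sum_neg_distrib]
      refine Finset.sum_congr rfl fun ρ _ => ?_
      rw [lcC_swap j k ρ a]
      ring
    rw [lhs1, Finset.sum_congr rfl fun k _ => rhs1 k, Finset.sum_neg_distrib, neg_inj]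
    have key : ∀ ρ : Fin (m + 2),
        lcC (Function.update i (Fin.last m) a) ρ * lcC j ρ =
          ∑ k : Fin (m + 1),
            lcC (Function.update i (Fin.last m) (j k)) ρ * lcC (Function.update j k a) ρ := by
      intro ρ
      have h := key_exchange (Function.update i (Fin.last m) a) j ρ ρ
      simp only [Function.update_idem, Function.update_self] at h
      simpa [lcC_update_last_self] using h
    calc ∑ ρ : Fin (m + 2), lcC (Function.update i (Fin.last m) a) ρ * lcC j ρ
        = ∑ ρ : Fin (m + 2), ∑ k : Fin (m + 1),
            lcC (Function.update i (Fin.last m) (j k)) ρ * lcC (Function.update j k a) ρ :=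
          Finset.sum_congr rfl fun ρ _ => key ρ
      _ = _ := Finset.sum_comm
  calc ∑ ρ : Fin (m + 2), linNambu m (Function.update i (Fin.last m) ρ) x * lcC j ρ
      = ∑ ρ : Fin (m + 2), ∑ a : Fin (m + 2),
          (lcC (Function.update i (Fin.last m) ρ) a * lcC j ρ) * x a := by
        refine Finset.sum_congr rfl fun ρ _ => ?_
        rw [linNambu_eq, Finset.sum_mul]
        exact Finset.sum_congr rfl fun a _ => by ring
    _ = ∑ a : Fin (m + 2), ∑ ρ : Fin (m + 2),
          (lcC (Function.update i (Fin.last m) ρ) a * lcC j ρ) * x a := Finset.sum_comm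
    _ = ∑ a : Fin (m + 2),
          (∑ ρ : Fin (m + 2), lcC (Function.update i (Fin.last m) ρ) a * lcC j ρ) * x a := by
        exact Finset.sum_congr rfl fun a _ => (Finset.sum_mul _ _ _).symm
    _ = ∑ a : Fin (m + 2),
          (∑ k : Fin (m + 1), ∑ ρ : Fin (m + 2),
            lcC (Function.update i (Fin.last m) (j k)) ρ * lcC (Function.update j k ρ) a)
              * x a := by
        exact Finset.sum_congr rfl fun a _ => by rw [coeff a]
    _ = ∑ a : Fin (m + 2), ∑ k : Fin (m + 1), ∑ ρ : Fin (m + 2),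
          (lcC (Function.update i (Fin.last m) (j k)) ρ * lcC (Function.update j k ρ) a)
            * x a := by
        refine Finset.sum_congr rfl fun a _ => ?_
        rw [Finset.sum_mul]
        exact Finset.sum_congr rfl fun k _ => Finset.sum_mul _ _ _
    _ = ∑ k : Fin (m + 1), ∑ a : Fin (m + 2), ∑ ρ : Fin (m + 2),
          (lcC (Function.update i (Fin.last m) (j k)) ρ * lcC (Function.update j k ρ) a)
            * x a := Finset.sum_comm
    _ = ∑ k : Fin (m + 1), ∑ ρ : Fin (m + 2), ∑ a : Fin (m + 2),
          (lcC (Function.update i (Fin.last m) (j k)) ρ * lcC (Function.update j k ρ) a)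
            * x a := Finset.sum_congr rfl fun k _ => Finset.sum_comm
    _ = ∑ k : Fin (m + 1), ∑ ρ : Fin (m + 2),
          lcC (Function.update i (Fin.last m) (j k)) ρ *
            linNambu m (Function.update j k ρ) x := by
        refine Finset.sum_congr rfl fun k _ => Finset.sum_congr rfl fun ρ _ => ?_
        rw [linNambu_eq, Finset.mul_sum]
        exact Finset.sum_congr rfl fun a _ => by ring

end NambuAux

/-- on `ℝ^n` (`n = m+2`), the linear `(n-1)`-tensor
`η_{i₁...i_{n-1}}(x) = ε_{i₁...i_{n-1} i_n} x^{i_n}` satisfies the Nambu differential condition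
and the algebraic condition `Σ = 0`, hence defines a Nambu-Poisson structure of order `n-1`. -/
theorem linear_tensor_is_nambu_poisson (m : ℕ) :
    -- differential condition (eq. (5) of the paper):
    (∀ (i j : Fin (m + 1) → Fin (m + 2)) (x : Fin (m + 2) → ℝ),
      ∑ ρ : Fin (m + 2),
          linNambu m (Function.update i (Fin.last m) ρ) x * pd ρ (linNambu m j) x =
        ∑ k : Fin (m + 1), ∑ ρ : Fin (m + 2),
          pd ρ (linNambu m (Function.update i (Fin.last m) (j k))) x *
            linNambu m (Function.update j k ρ) x) ∧
    -- algebraic condition `Σ = 0` (eq. (8) of the paper):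
    (∀ (i j : Fin (m + 1) → Fin (m + 2)) (x : Fin (m + 2) → ℝ),
      linNambu m i x * linNambu m j x =
        ∑ k : Fin (m + 1),
          linNambu m (Function.update i (Fin.last m) (j k)) x *
            linNambu m (Function.update j k (i (Fin.last m))) x) :=
  ⟨differential_cond, algebraic_cond⟩
end

section
/- The algebraic condition ε^{i_1...i_{n-1} j_1...j_{n-1}}_{k_1...k_{2n-2}} (ω_{i_1...i_{n-1}ρ} ω_{j_1...j_{n-1}σ} + ω_{i_1...i_{n-1}σ} ω_{j_1...j_{n-1}ρ}) = 0 is automatically satisfied by any completely antisymmetric n-tensor ω when n is even. -/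
/-!
Swapping the two blocks of `n - 1` indices is a permutation of sign `(-1) ^ (n - 1) = -1` for
even `n`, and the symmetrised product is invariant under that swap. Pairing each permutation `τ`
with its composite with the swap cancels the antisymmetrised sum term by term.
-/

open Equiv Equiv.Perm Finset

lemma finAddFlip_mul_self (m : ℕ) :
    (finAddFlip : Perm (Fin (m + m))) * finAddFlip = 1 := by
  ext i
  refine Fin.addCases (fun a ↦ ?_) (fun b ↦ ?_) i <;>
    simp only [Perm.mul_apply, finAddFlip_apply_castAdd, finAddFlip_apply_natAdd, Perm.one_apply]

lemma finAddFlip_eq_finRotate_pow (m : ℕ) :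
    (finAddFlip : Perm (Fin (m + m))) = finRotate (m + m) ^ m := by
  rcases Nat.eq_zero_or_pos m with rfl | hm
  · ext i; exact i.elim0
  have hcycle := finCycle_eq_finRotate_iterate (k := (⟨m, by omega⟩ : Fin (m + m)))
  ext i
  rw [Perm.coe_pow, ← hcycle, finCycle_apply, Fin.val_add]
  rcases lt_or_ge (i : ℕ) m with hi | hi
  · rw [show i = ⟨i, _⟩ from rfl, finAddFlip_apply_mk_left hi]
    dsimp only
    rw [Nat.mod_eq_of_lt (by omega)]
    omega
  · rw [show i = ⟨i, _⟩ from rfl, finAddFlip_apply_mk_right hi]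
    dsimp only
    rw [Nat.mod_eq_sub_mod (by omega), Nat.mod_eq_of_lt (by omega)]
    omega

lemma sign_finAddFlip (m : ℕ) :
    sign (finAddFlip : Perm (Fin (m + m))) = (-1) ^ m := by
  rw [finAddFlip_eq_finRotate_pow, map_pow, sign_finRotate]
  rcases m with _ | m
  · rfl
  · rw [show m + 1 + (m + 1) - 1 = 2 * m + 1 by omega, (odd_two_mul_add_one m).neg_one_pow]

lemma sum_sign_smul_eq_zero_of_mul_right_invariant {α M : Type*} [Fintype α] [DecidableEq α]
    [AddCommGroup M] {f : Perm α → M} {e : Perm α} (he : sign e = -1) (he₂ : e * e = 1)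
    (hf : ∀ τ, f (τ * e) = f τ) : ∑ τ, (sign τ : ℤ) • f τ = 0 := by
  refine sum_ninvolution (· * e) (fun τ ↦ ?_) (fun τ _ h ↦ ?_) (fun _ ↦ mem_univ _)
    (fun τ ↦ by rw [mul_assoc, he₂, mul_one])
  · rw [hf, map_mul, he]
    simp
  · rw [mul_eq_left.mp h, map_one] at he
    exact absurd he (by decide)

theorem algebraic_condition_automatic_for_even_order_general
    (p d : ℕ) (ω : (Fin (2 * p + 2) → Fin d) → ℝ)
    (ρ σv : Fin d) (k : Fin ((2 * p + 1) + (2 * p + 1)) → Fin d) :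
    ∑ τ : Equiv.Perm (Fin ((2 * p + 1) + (2 * p + 1))),
      (Equiv.Perm.sign τ : ℤ) •
        (ω (Fin.snoc (fun a : Fin (2 * p + 1) => k (τ (Fin.castAdd (2 * p + 1) a))) ρ) *
            ω (Fin.snoc (fun b : Fin (2 * p + 1) => k (τ (Fin.natAdd (2 * p + 1) b))) σv) +
          ω (Fin.snoc (fun a : Fin (2 * p + 1) => k (τ (Fin.castAdd (2 * p + 1) a))) σv) *
            ω (Fin.snoc (fun b : Fin (2 * p + 1) => k (τ (Fin.natAdd (2 * p + 1) b))) ρ)) = 0 := by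
  refine sum_sign_smul_eq_zero_of_mul_right_invariant (e := finAddFlip) ?_
    (finAddFlip_mul_self _) fun τ ↦ ?_
  · rw [sign_finAddFlip, (odd_two_mul_add_one p).neg_one_pow]
  · simp only [Perm.mul_apply, finAddFlip_apply_castAdd, finAddFlip_apply_natAdd]
    ring

/-- the algebraic condition
`ε^{i₁...i_{n-1} j₁...j_{n-1}}_{k₁...k_{2n-2}} (ω_{i...ρ} ω_{j...σ} + ω_{i...σ} ω_{j...ρ}) = 0`
(formulated as the signed sum over all permutations of the `2n-2` indices `k`) is automatically
satisfied by any completely antisymmetric tensor `ω` of even order `n = 2p+2`. -/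
theorem algebraic_condition_automatic_for_even_order
    (p d : ℕ) (ω : (Fin (2 * p + 2) → Fin d) → ℝ)
    (hanti : ∀ (σ : Equiv.Perm (Fin (2 * p + 2))) (idx : Fin (2 * p + 2) → Fin d),
      ω (idx ∘ σ) = (Equiv.Perm.sign σ : ℤ) • ω idx)
    (ρ σv : Fin d) (k : Fin ((2 * p + 1) + (2 * p + 1)) → Fin d) :
    ∑ τ : Equiv.Perm (Fin ((2 * p + 1) + (2 * p + 1))),
      (Equiv.Perm.sign τ : ℤ) •
        (ω (Fin.snoc (fun a : Fin (2 * p + 1) => k (τ (Fin.castAdd (2 * p + 1) a))) ρ) *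
            ω (Fin.snoc (fun b : Fin (2 * p + 1) => k (τ (Fin.natAdd (2 * p + 1) b))) σv) +
          ω (Fin.snoc (fun a : Fin (2 * p + 1) => k (τ (Fin.castAdd (2 * p + 1) a))) σv) *
            ω (Fin.snoc (fun b : Fin (2 * p + 1) => k (τ (Fin.natAdd (2 * p + 1) b))) ρ)) = 0 :=
  algebraic_condition_automatic_for_even_order_general p d ω ρ σv k
end

section
/- For even s, the multibracket of associative algebra elements defined by [x_1,...,x_s] = Σ_{σ∈S_s} sgn(σ) x_{σ(1)}···x_{σ(s)} satisfies the generalized Jacobi identity: Σ_{σ∈S_{2s-1}} sgn(σ) [[x_{σ(1)},...,x_{σ(s)}], x_{σ(s+1)},...,x_{σ(2s-1)}] = 0. -/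
/-- The fully antisymmetrized `s`-fold product in an associative algebra:
`[x_1,...,x_s] = Σ_{σ ∈ S_s} sgn(σ) x_{σ(1)} ⋯ x_{σ(s)}`. -/
noncomputable def multibracket {A : Type*} [Ring A] {s : ℕ} (x : Fin s → A) : A :=
  ∑ σ : Equiv.Perm (Fin s), (Equiv.Perm.sign σ : ℤ) • (List.ofFn fun i => x (σ i)).prod

/-!
Write `s` for the size of the inner bracket and `t = s - 1` for the number of remaining
arguments. Expanding the inner bracket and absorbing its permutations into the outer
antisymmetrization reduces the identity to the vanishing of the antisymmetrization of
`[y_1 ⋯ y_s, y_{s+1}, …, y_{s+t}]`. Expanding this outer bracket, write each of its permutations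
uniquely as `ρ * c ^ k`, where `ρ` fixes the letter `y_1 ⋯ y_s` and `c` is the cyclic shift of
the `t + 1` letters. The permutation `ρ` is absorbed as before, and a cyclic shift of the letters
is a rotation of the flattened word of odd length `s + t`, an even permutation. Hence the term
of `ρ * c ^ k` is `sgn (c ^ k) • [y_1, …, y_{s+t}]`, and these terms cancel since `c` is an odd
permutation (`t` is odd) of even order `t + 1`.
-/

open Equiv Equiv.Perm

theorem List.flatten_rotate {α : Type*} (L : List (List α)) {k : ℕ} (hk : k ≤ L.length) :
    (L.rotate k).flatten = L.flatten.rotate (L.take k).flatten.length := by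
  have h := List.rotate_append_length_eq (L.take k).flatten (L.drop k).flatten
  rw [← List.flatten_append, List.take_append_drop] at h
  rw [h, List.rotate_eq_drop_append_take hk, List.flatten_append]

theorem List.ofFn_comp_addRight {α : Type*} {n : ℕ} (f : Fin (n + 1) → α) (k : Fin (n + 1)) :
    List.ofFn (f ∘ Equiv.addRight k) = (List.ofFn f).rotate k := by
  refine List.ext_getElem (by simp) fun i h₁ h₂ => ?_
  simp only [List.getElem_ofFn, List.getElem_rotate, List.length_ofFn, Function.comp_apply,
    coe_addRight]
  rfl

theorem finRotate_succ_eq_addRight_one (n : ℕ) : finRotate (n + 1) = Equiv.addRight 1 :=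
  Equiv.ext finRotate_apply

theorem List.ofFn_comp_finRotate {α : Type*} {n : ℕ} (f : Fin n → α) :
    List.ofFn (f ∘ finRotate n) = (List.ofFn f).rotate 1 := by
  cases n with
  | zero => simp
  | succ n =>
    rw [finRotate_succ_eq_addRight_one, List.ofFn_comp_addRight, Fin.val_one']
    simpa using (List.ofFn f).rotate_mod 1

theorem List.ofFn_comp_finRotate_pow {α : Type*} {n : ℕ} (f : Fin n → α) (m : ℕ) :
    List.ofFn (f ∘ ⇑(finRotate n ^ m)) = (List.ofFn f).rotate m := by
  induction m with
  | zero => simp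
  | succ m ih =>
    rw [pow_succ, coe_mul, ← Function.comp_assoc, List.ofFn_comp_finRotate, ih,
      List.rotate_rotate]

theorem sign_finRotate_pow_of_odd {n : ℕ} (hn : Odd n) (m : ℕ) :
    sign (finRotate n ^ m) = 1 := by
  obtain ⟨k, rfl⟩ := hn
  simp [sign_finRotate, pow_mul]

theorem sum_sign_addRight_eq_zero {t : ℕ} (ht : Odd t) :
    ∑ k : Fin (t + 1), (sign (Equiv.addRight k) : ℤ) = 0 := by
  have h_one : (sign (Equiv.addRight (1 : Fin (t + 1))) : ℤ) = -1 := by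
    rw [← finRotate_succ_eq_addRight_one, sign_finRotate, Nat.add_sub_cancel, ht.neg_one_pow]
    rfl
  have h_shift := Fintype.sum_equiv (Equiv.addRight (1 : Fin (t + 1)))
    (fun k => (sign (Equiv.addRight (k + 1)) : ℤ)) (fun k => (sign (Equiv.addRight k) : ℤ))
    (fun _ => rfl)
  simp only [addRight_add, Perm.sign_mul, Units.val_mul, h_one, neg_one_mul,
    Finset.sum_neg_distrib] at h_shift
  omega

theorem bijective_decomposeFin_symm_mul_addRight (t : ℕ) :
    Function.Bijective fun p : Perm (Fin t) × Fin (t + 1) =>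
      decomposeFin.symm (0, p.1) * Equiv.addRight p.2 := by
  refine (Fintype.bijective_iff_injective_and_card _).2
    ⟨?_, by simp [Fintype.card_perm, Nat.factorial_succ, mul_comm]⟩
  rintro ⟨ρ, k⟩ ⟨ρ', k'⟩ h
  obtain rfl : k = k' := by
    have h₀ := DFunLike.congr_fun h (-k)
    simp only [coe_mul, Function.comp_apply, coe_addRight, neg_add_cancel,
      decomposeFin_symm_apply_zero] at h₀
    rw [← neg_add_eq_zero]
    exact (decomposeFin.symm (0, ρ')).injective
      (h₀.symm.trans (decomposeFin_symm_apply_zero 0 ρ').symm)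
  simpa using decomposeFin.symm.injective (mul_right_cancel h)

def finAddPerm {s t : ℕ} (a : Perm (Fin s)) (b : Perm (Fin t)) : Perm (Fin (s + t)) :=
  finSumFinEquiv.permCongr (a.sumCongr b)

@[simp]
theorem finAddPerm_castAdd {s t : ℕ} (a : Perm (Fin s)) (b : Perm (Fin t)) (i : Fin s) :
    finAddPerm a b (Fin.castAdd t i) = Fin.castAdd t (a i) := by
  simp [finAddPerm, permCongr_apply]

@[simp]
theorem finAddPerm_natAdd {s t : ℕ} (a : Perm (Fin s)) (b : Perm (Fin t)) (j : Fin t) :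
    finAddPerm a b (Fin.natAdd s j) = Fin.natAdd s (b j) := by
  simp [finAddPerm, permCongr_apply]

@[simp]
theorem sign_finAddPerm {s t : ℕ} (a : Perm (Fin s)) (b : Perm (Fin t)) :
    sign (finAddPerm a b) = sign a * sign b := by
  rw [finAddPerm, sign_permCongr, sign_sumCongr]

section Alternatize

variable {ι M N : Type*} [Fintype ι] [DecidableEq ι] [AddCommGroup N]

def alternatize (g : (ι → M) → N) (x : ι → M) : N :=
  ∑ σ : Perm ι, (sign σ : ℤ) • g (x ∘ σ)

theorem alternatize_comp_perm (g : (ι → M) → N) (e : Perm ι) (x : ι → M) :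
    alternatize (fun y => g (y ∘ e)) x = (sign e : ℤ) • alternatize g x := by
  rw [alternatize, alternatize, Finset.smul_sum]
  refine Fintype.sum_equiv (Equiv.mulRight e) _ _ fun σ => ?_
  rw [coe_mulRight, Perm.sign_mul, smul_smul, coe_mul, Function.comp_assoc, Units.val_mul,
    mul_left_comm, ← Units.val_mul, Int.units_mul_self, Units.val_one, mul_one]

theorem alternatize_sum {κ : Type*} [Fintype κ] (c : κ → ℤ) (g : κ → (ι → M) → N)
    (x : ι → M) :
    alternatize (fun y => ∑ i, c i • g i y) x = ∑ i, c i • alternatize (g i) x := by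
  simp only [alternatize, Finset.smul_sum, smul_comm _ (c _)]
  exact Finset.sum_comm

end Alternatize

theorem multibracket_cons_sum {A : Type*} [Ring A] {t : ℕ} {κ : Type*} [Fintype κ]
    (c : κ → ℤ) (B : κ → A) (z : Fin t → A) :
    multibracket (Fin.cons (∑ i, c i • B i) z : Fin (t + 1) → A)
      = ∑ i, c i • multibracket (Fin.cons (B i) z : Fin (t + 1) → A) := by
  have h_alt (y : Fin (t + 1) → A) :
      multibracket y = (MultilinearMap.mkPiAlgebraFin ℤ (t + 1) A).alternatization y := by
    simp [multibracket, MultilinearMap.alternatization_apply, Units.smul_def]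
  have h_update (C : A) :
      (Fin.cons C z : Fin (t + 1) → A) = Function.update (Fin.cons 0 z) 0 C :=
    (Fin.update_cons_zero _ _ _).symm
  rw [h_alt, h_update, AlternatingMap.map_update_sum]
  refine Finset.sum_congr rfl fun i _ => ?_
  rw [AlternatingMap.map_update_smul, ← h_update, h_alt]

section Blocks

variable {A : Type*} (s t : ℕ)

def headBlocks (y : Fin (s + t) → A) : List (List A) :=
  List.ofFn (fun i => y (Fin.castAdd t i)) :: (List.ofFn fun j => y (Fin.natAdd s j)).map ([·])

theorem flatten_headBlocks (y : Fin (s + t) → A) :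
    (headBlocks s t y).flatten = List.ofFn y := by
  rw [headBlocks, List.flatten_cons, ← List.flatMap_def, List.flatMap_singleton',
    List.ofFn_add]
  rfl

theorem map_length_headBlocks (y : Fin (s + t) → A) :
    (headBlocks s t y).map List.length = s :: List.replicate t 1 := by
  simp [headBlocks, Function.comp_def]

def collapseHead [Monoid A] (y : Fin (s + t) → A) : Fin (t + 1) → A :=
  Fin.cons (List.ofFn fun i => y (Fin.castAdd t i)).prod fun j => y (Fin.natAdd s j)

theorem map_prod_headBlocks [Monoid A] (y : Fin (s + t) → A) :
    (headBlocks s t y).map List.prod = List.ofFn (collapseHead s t y) := by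
  simp [headBlocks, collapseHead, Function.comp_def]

theorem collapseHead_comp_finAddPerm_one [Monoid A] (ρ : Perm (Fin t)) (y : Fin (s + t) → A) :
    collapseHead s t (y ∘ finAddPerm 1 ρ) = collapseHead s t y ∘ decomposeFin.symm (0, ρ) := by
  ext i
  refine Fin.cases ?_ (fun j => ?_) i <;> simp [collapseHead, decomposeFin_symm_apply_succ]

def collapsedWord [Monoid A] (π : Perm (Fin (t + 1))) (y : Fin (s + t) → A) : A :=
  (List.ofFn (collapseHead s t y ∘ π)).prod

theorem collapsedWord_decomposeFin_symm_mul [Monoid A] (ρ : Perm (Fin t))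
    (π : Perm (Fin (t + 1))) :
    collapsedWord s t (decomposeFin.symm (0, ρ) * π)
      = fun y : Fin (s + t) → A => collapsedWord s t π (y ∘ finAddPerm 1 ρ) := by
  funext y
  rw [collapsedWord, collapsedWord, collapseHead_comp_finAddPerm_one, coe_mul,
    Function.comp_assoc]

theorem exists_collapsedWord_addRight [Monoid A] (k : Fin (t + 1)) :
    ∃ m : ℕ, ∀ y : Fin (s + t) → A,
      collapsedWord s t (Equiv.addRight k) y
        = (List.ofFn (y ∘ ⇑(finRotate (s + t) ^ m))).prod := by
  -- `m` is the total length of the first `k` letters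
  refine ⟨((s :: List.replicate t 1).take k).sum, fun y => ?_⟩
  have hk : (k : ℕ) ≤ (headBlocks s t y).length := by simp [headBlocks]
  rw [collapsedWord, List.ofFn_comp_addRight, ← map_prod_headBlocks, ← List.map_rotate,
    ← List.prod_flatten, List.flatten_rotate _ hk, List.length_flatten, List.map_take,
    map_length_headBlocks, flatten_headBlocks, List.ofFn_comp_finRotate_pow]

variable [Ring A]

noncomputable def nestedBracket (y : Fin (s + t) → A) : A :=
  multibracket (Fin.cons (multibracket fun i => y (Fin.castAdd t i)) fun j => y (Fin.natAdd s j))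

theorem nestedBracket_eq_sum (y : Fin (s + t) → A) :
    nestedBracket s t y = ∑ τ : Perm (Fin s),
      (sign τ : ℤ) • multibracket (collapseHead s t (y ∘ finAddPerm τ 1)) := by
  have h_inner : (multibracket fun i => y (Fin.castAdd t i)) = ∑ τ : Perm (Fin s),
      (sign τ : ℤ) • (List.ofFn fun i => (y ∘ finAddPerm τ 1) (Fin.castAdd t i)).prod := by
    simp [multibracket]
  rw [nestedBracket, h_inner, multibracket_cons_sum]
  simp [collapseHead]

theorem alternatize_nestedBracket (x : Fin (s + t) → A) :
    alternatize (nestedBracket s t) x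
      = s.factorial • alternatize (fun y => multibracket (collapseHead s t y)) x := by
  have h_absorb (τ : Perm (Fin s)) :
      alternatize (fun y => multibracket (collapseHead s t (y ∘ finAddPerm τ 1))) x
        = (sign τ : ℤ) • alternatize (fun y => multibracket (collapseHead s t y)) x := by
    simpa using
      alternatize_comp_perm (fun y => multibracket (collapseHead s t y)) (finAddPerm τ 1) x
  rw [funext (nestedBracket_eq_sum s t), alternatize_sum]
  simp_rw [h_absorb, smul_smul, ← Units.val_mul, Int.units_mul_self, Units.val_one, one_smul,
    Finset.sum_const, Finset.card_univ, Fintype.card_perm, Fintype.card_fin]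

theorem alternatize_collapsedWord_decomposeFin_symm_mul (ρ : Perm (Fin t))
    (π : Perm (Fin (t + 1))) (x : Fin (s + t) → A) :
    alternatize (collapsedWord s t (decomposeFin.symm (0, ρ) * π)) x
      = (sign ρ : ℤ) • alternatize (collapsedWord s t π) x := by
  rw [collapsedWord_decomposeFin_symm_mul, alternatize_comp_perm, sign_finAddPerm, Perm.sign_one,
    one_mul]

theorem alternatize_collapsedWord_addRight (hst : Odd (s + t)) (k : Fin (t + 1))
    (x : Fin (s + t) → A) :
    alternatize (collapsedWord s t (Equiv.addRight k)) x = multibracket x := by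
  obtain ⟨m, hm⟩ := exists_collapsedWord_addRight s t (A := A) k
  simp only [funext hm]
  rw [alternatize_comp_perm (fun y => (List.ofFn y).prod), sign_finRotate_pow_of_odd hst,
    Units.val_one, one_smul]
  rfl

theorem alternatize_multibracket_collapseHead (hs : Even s) (ht : Odd t)
    (x : Fin (s + t) → A) :
    alternatize (fun y => multibracket (collapseHead s t y)) x = 0 := by
  calc alternatize (fun y => multibracket (collapseHead s t y)) x
      = ∑ π, (sign π : ℤ) • alternatize (collapsedWord s t π) x :=
        alternatize_sum _ _ x
    _ = ∑ p : Perm (Fin t) × Fin (t + 1), (sign (Equiv.addRight p.2) : ℤ) • multibracket x := by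
        refine (Fintype.sum_bijective _ (bijective_decomposeFin_symm_mul_addRight t) _ _
          fun p => ?_).symm
        rw [alternatize_collapsedWord_decomposeFin_symm_mul,
          alternatize_collapsedWord_addRight s t (hs.add_odd ht), Perm.sign_mul,
          decomposeFin.symm_sign, if_pos rfl, one_mul, smul_smul, Units.val_mul, mul_comm,
          ← mul_assoc, ← Units.val_mul, Int.units_mul_self, Units.val_one, one_mul]
    _ = 0 := by
        rw [Fintype.sum_prod_type]
        simp only [← Finset.sum_smul, sum_sign_addRight_eq_zero ht, zero_smul,
          Finset.sum_const_zero]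

theorem alternatize_nestedBracket_eq_zero (hs : Even s) (ht : Odd t) (x : Fin (s + t) → A) :
    alternatize (nestedBracket s t) x = 0 := by
  rw [alternatize_nestedBracket, alternatize_multibracket_collapseHead s t hs ht, smul_zero]

end Blocks

/-- for even `s = 2p+2`, the antisymmetrized multibracket of associative algebra
elements satisfies the generalized Jacobi identity
`Σ_{σ ∈ S_{2s-1}} sgn(σ) [[x_{σ(1)},...,x_{σ(s)}], x_{σ(s+1)},...,x_{σ(2s-1)}] = 0`. -/
theorem even_multibracket_GJI (p : ℕ) (A : Type*) [Ring A]
    (x : Fin ((2 * p + 2) + (2 * p + 1)) → A) :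
    ∑ σ : Equiv.Perm (Fin ((2 * p + 2) + (2 * p + 1))),
      (Equiv.Perm.sign σ : ℤ) •
        multibracket
          (Fin.cons (multibracket fun i : Fin (2 * p + 2) => x (σ (Fin.castAdd (2 * p + 1) i)))
            (fun j : Fin (2 * p + 1) => x (σ (Fin.natAdd (2 * p + 2) j)))) = 0 :=
  alternatize_nestedBracket_eq_zero (2 * p + 2) (2 * p + 1) ⟨p + 1, by ring⟩ ⟨p, rfl⟩ x
end

section
/- For s = 3, the antisymmetrized triple bracket of associative operators does not satisfy the Nambu fundamental identity: there exist associative algebras and elements x_1,...,x_5 with [x_1,x_2,[x_3,x_4,x_5]] ≠ [[x_1,x_2,x_3],x_4,x_5] + [x_3,[x_1,x_2,x_4],x_5] + [x_3,x_4,[x_1,x_2,x_5]]. -/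
/-- The antisymmetrized triple bracket `[x,y,z] = Σ_{σ∈S₃} sgn(σ) x_{σ(1)}x_{σ(2)}x_{σ(3)}`. -/
def tripleBracket {A : Type*} [Ring A] (a b c : A) : A :=
  a * b * c - a * c * b + b * c * a - b * a * c + c * a * b - c * b * a

/-- the antisymmetrized triple bracket of associative operators does not satisfy
the Nambu fundamental identity: there exist an associative algebra and elements `x₁,...,x₅`
violating the 5-point, 4-term identity. -/
theorem triple_bracket_fails_fundamental_identity :
    ∃ (A : Type) (inst : Ring A) (x : Fin 5 → A),
      @tripleBracket A inst (x 0) (x 1) (@tripleBracket A inst (x 2) (x 3) (x 4)) ≠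
        @tripleBracket A inst (@tripleBracket A inst (x 0) (x 1) (x 2)) (x 3) (x 4) +
          @tripleBracket A inst (x 2) (@tripleBracket A inst (x 0) (x 1) (x 3)) (x 4) +
          @tripleBracket A inst (x 2) (x 3) (@tripleBracket A inst (x 0) (x 1) (x 4)) := by
  refine ⟨Matrix (Fin 3) (Fin 3) ℤ, inferInstance,
    ![!![1,0,0;0,0,0;0,0,0], !![0,1,0;0,0,0;0,0,0], !![1,0,0;0,0,0;0,0,0],
      !![0,0,1;0,0,0;0,0,0], !![0,0,0;1,0,0;0,0,0]], ?_⟩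
  intro h
  have := congrFun (congrFun h 0) 2
  simp [tripleBracket, Matrix.mul_apply, Fin.sum_univ_succ, Matrix.add_apply,
    Matrix.sub_apply] at this
end

section
/- Let V be a vector space with an antisymmetric s-bracket satisfying the fundamental identity (a Nambu-Lie algebra). The dot products X·Y = Σ_i y_1⊗...⊗[x_1,...,x_{s-1},y_i]⊗...⊗y_{s-1} on V^{⊗(s-1)} and X·x = [x_1,...,x_{s-1},x] satisfy the Leibniz/Jacobi-like identities X·(Y·Z) − (X·Y)·Z = Y·(X·Z) and X·(Y·z) − (X·Y)·z = Y·(X·z). -/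
open scoped TensorProduct

/-- let `V` carry an antisymmetric `s`-bracket (`s = m+2`) satisfying the
fundamental identity (a Nambu-Lie algebra). The dot products
`X·Y = Σᵢ y₁⊗⋯⊗[x₁,...,x_{s-1},yᵢ]⊗⋯⊗y_{s-1}` on `V^{⊗(s-1)}` (given by the linear map `dot X`,
extended to an action `Dot` of tensors, and the action `DotV` on `V`) satisfy the
Leibniz/Jacobi-like identities `X·(Y·Z) - (X·Y)·Z = Y·(X·Z)` and
`X·(Y·z) - (X·Y)·z = Y·(X·z)`. -/
theorem nambu_lie_dot_product_identities
    (m : ℕ) (V : Type*) [AddCommGroup V] [Module ℝ V]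
    (b : (Fin (m + 2) → V) → V)
    (hanti : ∀ (σ : Equiv.Perm (Fin (m + 2))) (f : Fin (m + 2) → V),
      b (f ∘ σ) = (Equiv.Perm.sign σ : ℤ) • b f)
    (hFI : ∀ (X : Fin (m + 1) → V) (y : Fin (m + 2) → V),
      b (Fin.snoc X (b y)) =
        ∑ k : Fin (m + 2), b (Function.update y k (b (Fin.snoc X (y k)))))
    (dot : (Fin (m + 1) → V) →
      (⨂[ℝ] _ : Fin (m + 1), V) →ₗ[ℝ] (⨂[ℝ] _ : Fin (m + 1), V))
    (hdot : ∀ (X y : Fin (m + 1) → V),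
      dot X (PiTensorProduct.tprod ℝ y) =
        ∑ i : Fin (m + 1),
          PiTensorProduct.tprod ℝ (Function.update y i (b (Fin.snoc X (y i)))))
    (Dot : (⨂[ℝ] _ : Fin (m + 1), V) →ₗ[ℝ]
      (⨂[ℝ] _ : Fin (m + 1), V) →ₗ[ℝ] (⨂[ℝ] _ : Fin (m + 1), V))
    (hDot : ∀ X : Fin (m + 1) → V, Dot (PiTensorProduct.tprod ℝ X) = dot X)
    (DotV : (⨂[ℝ] _ : Fin (m + 1), V) →ₗ[ℝ] V →ₗ[ℝ] V)
    (hDotV : ∀ (X : Fin (m + 1) → V) (v : V),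
      DotV (PiTensorProduct.tprod ℝ X) v = b (Fin.snoc X v))
    (X Y : Fin (m + 1) → V) :
    (∀ Z : ⨂[ℝ] _ : Fin (m + 1), V,
      dot X (dot Y Z) - Dot (dot X (PiTensorProduct.tprod ℝ Y)) Z = dot Y (dot X Z)) ∧
    (∀ z : V,
      b (Fin.snoc X (b (Fin.snoc Y z))) - DotV (dot X (PiTensorProduct.tprod ℝ Y)) z =
        b (Fin.snoc Y (b (Fin.snoc X z)))) := by
  classical
  -- key consequence of the fundamental identity
  have key : ∀ (X Y : Fin (m+1) → V) (z : V),
      b (Fin.snoc X (b (Fin.snoc Y z))) =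
        (∑ i : Fin (m+1),
          b (Fin.snoc (Function.update Y i (b (Fin.snoc X (Y i)))) z))
        + b (Fin.snoc Y (b (Fin.snoc X z))) := by
    intro X Y z
    have h := hFI X (Fin.snoc Y z)
    rw [h, Fin.sum_univ_castSucc]
    congr 1
    · apply Finset.sum_congr rfl
      intro i _
      rw [Fin.snoc_castSucc, ← Fin.snoc_update]
    · rw [Fin.snoc_last, Fin.update_snoc_last]
  -- splitting a double sum into diagonal and off-diagonal parts
  have hsplit : ∀ (F : Fin (m+1) → Fin (m+1) → (⨂[ℝ] _ : Fin (m + 1), V)),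
      ∑ j : Fin (m+1), ∑ i : Fin (m+1), F j i
        = (∑ j : Fin (m+1), F j j)
          + ∑ j : Fin (m+1), ∑ i ∈ Finset.univ.erase j, F j i := by
    intro F
    rw [← Finset.sum_add_distrib]
    refine Finset.sum_congr rfl fun j _ => ?_
    exact (Finset.add_sum_erase _ _ (Finset.mem_univ j)).symm
  constructor
  · intro Z
    induction Z using PiTensorProduct.induction_on with
    | smul_tprod r z =>
      simp only [map_smul, LinearMap.smul_apply, ← smul_sub]
      congr 1
      rw [hdot Y z, hdot X Y]
      simp only [map_sum, LinearMap.sum_apply, hDot, hdot]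
      rw [Finset.sum_comm
        (f := fun i j => PiTensorProduct.tprod ℝ
          (Function.update z j
            (b (Fin.snoc (Function.update Y i (b (Fin.snoc X (Y i)))) (z j)))))]
      have hmid : (∑ j : Fin (m+1), ∑ i : Fin (m+1), PiTensorProduct.tprod ℝ
              (Function.update z j
                (b (Fin.snoc (Function.update Y i (b (Fin.snoc X (Y i)))) (z j)))))
          = ∑ j : Fin (m+1),
              (PiTensorProduct.tprod ℝ (Function.update z j (b (Fin.snoc X (b (Fin.snoc Y (z j))))))
               - PiTensorProduct.tprod ℝ (Function.update z j (b (Fin.snoc Y (b (Fin.snoc X (z j))))))) := by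
        refine Finset.sum_congr rfl fun j _ => ?_
        rw [← MultilinearMap.map_update_sum (PiTensorProduct.tprod ℝ) Finset.univ j,
            ← MultilinearMap.map_update_sub]
        have hb : (∑ i : Fin (m+1),
            b (Fin.snoc (Function.update Y i (b (Fin.snoc X (Y i)))) (z j)))
            = b (Fin.snoc X (b (Fin.snoc Y (z j)))) - b (Fin.snoc Y (b (Fin.snoc X (z j)))) := by
          rw [key X Y (z j)]; abel
        rw [hb]
      rw [hmid, Finset.sum_sub_distrib]
      rw [hsplit, hsplit]
      have hdiag1 : ∀ j : Fin (m+1),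
          PiTensorProduct.tprod ℝ
            (Function.update (Function.update z j (b (Fin.snoc Y (z j)))) j
              (b (Fin.snoc X (Function.update z j (b (Fin.snoc Y (z j))) j))))
          = PiTensorProduct.tprod ℝ (Function.update z j (b (Fin.snoc X (b (Fin.snoc Y (z j)))))) := by
        intro j
        rw [Function.update_self, Function.update_idem]
      have hdiag2 : ∀ j : Fin (m+1),
          PiTensorProduct.tprod ℝ
            (Function.update (Function.update z j (b (Fin.snoc X (z j)))) j
              (b (Fin.snoc Y (Function.update z j (b (Fin.snoc X (z j))) j))))
          = PiTensorProduct.tprod ℝ (Function.update z j (b (Fin.snoc Y (b (Fin.snoc X (z j)))))) := by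
        intro j
        rw [Function.update_self, Function.update_idem]
      simp only [hdiag1, hdiag2]
      have hoff : (∑ j : Fin (m+1), ∑ i ∈ Finset.univ.erase j,
            PiTensorProduct.tprod ℝ
              (Function.update (Function.update z j (b (Fin.snoc Y (z j)))) i
                (b (Fin.snoc X (Function.update z j (b (Fin.snoc Y (z j))) i)))))
          = ∑ j : Fin (m+1), ∑ i ∈ Finset.univ.erase j,
            PiTensorProduct.tprod ℝ
              (Function.update (Function.update z j (b (Fin.snoc X (z j)))) i
                (b (Fin.snoc Y (Function.update z j (b (Fin.snoc X (z j))) i)))) := by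
        rw [Finset.sum_comm']
        · refine Finset.sum_congr rfl fun j _ => Finset.sum_congr rfl fun i hi => ?_
          have hij : i ≠ j := Finset.ne_of_mem_erase hi
          rw [Function.update_of_ne hij.symm, Function.update_of_ne hij,
            Function.update_comm hij.symm]
        · intro i j
          simp [Finset.mem_erase, and_comm, eq_comm, ne_comm]
      rw [hoff]
      abel
    | add a c ha hc =>
      simp only [map_add]
      rw [← ha, ← hc]; abel
  · intro z
    rw [hdot X Y, map_sum]
    simp only [LinearMap.sum_apply, hDotV]
    rw [key X Y z]
    abel
end

section
/- For a Nambu-Lie algebra V of order s, the cohomology operator δ_s defined on p-cochains α: V^{⊗(p(s-1)+1)} → R by (δ_s α)(X_1,...,X_{p+1},x) = Σ_{i<j} (-1)^{i+1} α(X_1,...,X̂_i,...,X_i·X_j,...,X_{p+1},x) + Σ_i (-1)^{i+1} α(X_1,...,X̂_i,...,X_{p+1},X_i·x) satisfies δ_s² = 0. -/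
/-- `p`-cochains of a Nambu-Lie algebra of order `s = m+2`: multilinear functionals on
`V^{⊗(p(s-1)+1)}`, written on grouped tuples `(X₁,...,X_p,x)` with `Xᵢ ∈ V^{s-1}`, `x ∈ V`. -/
def NLCochain (m p : ℕ) (V : Type*) : Type _ :=
  ((Fin p → (Fin (m + 1) → V)) × V) → ℝ

/-- The Nambu-Lie coboundary operator `δₛ` (eq. (24) of the paper):
`(δₛα)(X₁,...,X_{p+1},x) = Σ_{i<j} (-1)^{i+1} α(X₁,...,X̂ᵢ,...,Xᵢ·Xⱼ,...,X_{p+1},x)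
 + Σᵢ (-1)^{i+1} α(X₁,...,X̂ᵢ,...,X_{p+1},Xᵢ·x)`,
with `Xᵢ·Xⱼ` expanded as the sum over slots of `Xⱼ` modified by the bracket. -/
noncomputable def NLdelta (m : ℕ) {V : Type*} (b : (Fin (m + 2) → V) → V) (p : ℕ)
    (α : NLCochain m p V) : NLCochain m (p + 1) V :=
  fun Xx =>
    (∑ i : Fin (p + 1), ∑ j : Fin (p + 1),
      if (i : ℕ) < (j : ℕ) then
        ((-1 : ℤ) ^ (i : ℕ)) •
          ∑ k : Fin (m + 1),
            α (i.removeNth (Function.update Xx.1 j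
                (Function.update (Xx.1 j) k (b (Fin.snoc (Xx.1 i) (Xx.1 j k))))), Xx.2)
      else 0) +
    ∑ i : Fin (p + 1),
      ((-1 : ℤ) ^ (i : ℕ)) • α (i.removeNth Xx.1, b (Fin.snoc (Xx.1 i) Xx.2))

set_option linter.unusedSectionVars false
namespace NLnil

variable {m : ℕ} {V : Type*} [AddCommGroup V] [Module ℝ V]

def aa (b : (Fin (m + 2) → V) → V) (W : Fin (m + 1) → V) (y : V) : V := b (Fin.snoc W y)

def cc (b : (Fin (m + 2) → V) → V) (W Z : Fin (m + 1) → V) (k : Fin (m + 1)) :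
    Fin (m + 1) → V :=
  Function.update Z k (aa b W (Z k))

lemma sum_extract {M : Type*} [AddCommGroup M] {ι : Type*} [DecidableEq ι]
    (W : Finset ι) (j : ι) (g : ι → M) :
    ∑ j₂ ∈ W, g j₂ = (if j ∈ W then g j else 0) + ∑ j₂ ∈ W.erase j, g j₂ := by
  by_cases h : j ∈ W
  · rw [if_pos h, Finset.add_sum_erase _ _ h]
  · rw [if_neg h, Finset.erase_eq_of_notMem h, zero_add]

lemma offdiag_swap {M : Type*} [AddCommGroup M] {ι : Type*} [DecidableEq ι]
    (P Q : Finset ι) (G H : ι → ι → M)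
    (hGH : ∀ j j₂, j ≠ j₂ → G j j₂ = H j₂ j) :
    ∑ j ∈ P, ∑ j₂ ∈ Q.erase j, G j j₂ = ∑ j ∈ Q, ∑ j₂ ∈ P.erase j, H j j₂ := by
  have e1 : ∀ (S : Finset ι) (j : ι) (g : ι → M),
      ∑ j₂ ∈ S.erase j, g j₂ = ∑ j₂ ∈ S, if j₂ ≠ j then g j₂ else 0 := by
    intro S j g
    rw [← Finset.filter_ne', Finset.sum_filter]
  simp only [e1]
  rw [Finset.sum_comm]
  refine Finset.sum_congr rfl fun j _ => Finset.sum_congr rfl fun j₂ _ => ?_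
  by_cases h : j ≠ j₂
  · rw [if_pos (Ne.symm h), if_pos h, hGH j₂ j (Ne.symm h)]
  · push_neg at h
    subst h
    simp

lemma split_diag {M : Type*} [AddCommGroup M] {n : ℕ} (F : Fin n → Fin n → M) :
    (∑ k : Fin n, ∑ k₂ : Fin n, F k k₂)
      = (∑ k : Fin n, F k k) + ∑ k : Fin n, ∑ k₂ ∈ Finset.univ.erase k, F k k₂ := by
  rw [← Finset.sum_add_distrib]
  refine Finset.sum_congr rfl fun k _ => ?_
  rw [sum_extract Finset.univ k (F k), if_pos (Finset.mem_univ k)]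

lemma cc_swap (b : (Fin (m + 2) → V) → V) (A Bb Z : Fin (m + 1) → V) {k k₂ : Fin (m + 1)}
    (h : k ≠ k₂) : cc b Bb (cc b A Z k) k₂ = cc b A (cc b Bb Z k₂) k := by
  unfold cc
  rw [Function.update_of_ne (Ne.symm h), Function.update_of_ne h,
    Function.update_comm h]

lemma cc_same (b : (Fin (m + 2) → V) → V) (A Bb Z : Fin (m + 1) → V) (k : Fin (m + 1)) :
    cc b Bb (cc b A Z k) k = Function.update Z k (aa b Bb (aa b A (Z k))) := by
  unfold cc
  rw [Function.update_self, Function.update_idem]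

/-- diagonal identity: two nested actions on the same block, plus the compound-action term,
equal the opposite nesting. -/
lemma diag_id {p : ℕ} (b : (Fin (m + 2) → V) → V)
    (α : ((Fin p → (Fin (m + 1) → V)) × V) → ℝ)
    (hFI' : ∀ (A B : Fin (m + 1) → V) (y : V),
      aa b A (aa b B y) = (∑ k : Fin (m + 1), aa b (cc b A B k) y) + aa b B (aa b A y))
    (hα_blocks : ∀ (X : Fin p → (Fin (m + 1) → V)) (i : Fin p) (k : Fin (m + 1))
      (v w : V) (c : ℝ) (x : V),
      α (Function.update X i (Function.update (X i) k (v + w)), x) =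
          α (Function.update X i (Function.update (X i) k v), x) +
            α (Function.update X i (Function.update (X i) k w), x) ∧
        α (Function.update X i (Function.update (X i) k (c • v)), x) =
          c • α (Function.update X i (Function.update (X i) k v), x))
    (T : Fin p → (Fin (m + 1) → V)) (x : V) (A Bb : Fin (m + 1) → V) (j : Fin p) :
    (∑ k : Fin (m + 1), ∑ k₂ : Fin (m + 1),
        α (Function.update T j (cc b Bb (cc b A (T j) k) k₂), x))
    + (∑ k : Fin (m + 1), ∑ k₂ : Fin (m + 1),
        α (Function.update T j (cc b (cc b A Bb k) (T j) k₂), x))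
    = ∑ k : Fin (m + 1), ∑ k₂ : Fin (m + 1),
        α (Function.update T j (cc b A (cc b Bb (T j) k) k₂), x) := by
  classical
  rw [split_diag (fun k k₂ => α (Function.update T j (cc b Bb (cc b A (T j) k) k₂), x)),
    split_diag (fun k k₂ => α (Function.update T j (cc b A (cc b Bb (T j) k) k₂), x))]
  have hoff :
      (∑ k : Fin (m + 1), ∑ k₂ ∈ Finset.univ.erase k,
        α (Function.update T j (cc b Bb (cc b A (T j) k) k₂), x))
      = ∑ k : Fin (m + 1), ∑ k₂ ∈ Finset.univ.erase k,
        α (Function.update T j (cc b A (cc b Bb (T j) k) k₂), x) :=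
    offdiag_swap _ _ _ _ (fun k k₂ h => by rw [cc_swap b A Bb (T j) h])
  have hsub : ∀ w : V, (∑ k : Fin (m + 1), aa b (cc b A Bb k) w)
      = aa b A (aa b Bb w) - aa b Bb (aa b A w) :=
    fun w => eq_sub_iff_add_eq.mpr (hFI' A Bb w).symm
  have hK : ∀ k₂ : Fin (m + 1),
      (∑ k : Fin (m + 1),
        α (Function.update T j (Function.update (T j) k₂ (aa b (cc b A Bb k) (T j k₂))), x))
      = α (Function.update T j (Function.update (T j) k₂ (aa b A (aa b Bb (T j k₂)))), x)
        - α (Function.update T j (Function.update (T j) k₂ (aa b Bb (aa b A (T j k₂)))), x) := by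
    intro k₂
    set f : V →+ ℝ := AddMonoidHom.mk'
      (fun y => α (Function.update T j (Function.update (T j) k₂ y), x))
      (fun y z => (hα_blocks T j k₂ y z 0 x).1) with hf
    have hfa : ∀ y, α (Function.update T j (Function.update (T j) k₂ y), x) = f y :=
      fun _ => rfl
    simp only [hfa]
    rw [← map_sum, hsub, map_sub]
  have hmid : (∑ k : Fin (m + 1), ∑ k₂ : Fin (m + 1),
        α (Function.update T j (cc b (cc b A Bb k) (T j) k₂), x))
      = (∑ k : Fin (m + 1),
          α (Function.update T j (Function.update (T j) k (aa b A (aa b Bb (T j k)))), x))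
        - ∑ k : Fin (m + 1),
          α (Function.update T j (Function.update (T j) k (aa b Bb (aa b A (T j k)))), x) := by
    rw [Finset.sum_comm, ← Finset.sum_sub_distrib]
    exact Finset.sum_congr rfl fun k₂ _ => hK k₂
  simp only [cc_same]
  rw [hmid, hoff]
  ring

def dbl {p : ℕ} (b : (Fin (m + 2) → V) → V)
    (α : ((Fin p → (Fin (m + 1) → V)) × V) → ℝ)
    (T : Fin p → (Fin (m + 1) → V)) (x : V)
    (A Bb : Fin (m + 1) → V) (j j₂ : Fin p) : ℝ :=
  ∑ k : Fin (m + 1), ∑ k₂ : Fin (m + 1),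
    α (Function.update (Function.update T j (cc b A (T j) k)) j₂
        (cc b Bb (Function.update T j (cc b A (T j) k) j₂) k₂), x)

lemma upd_swap {p : ℕ} (T : Fin p → (Fin (m + 1) → V)) {j j₂ : Fin p} (h : j ≠ j₂)
    (P : Fin (m + 1) → V) (g : (Fin (m + 1) → V) → Fin (m + 1) → V) :
    Function.update (Function.update T j P) j₂
      (g (Function.update T j P j₂)) =
    Function.update (Function.update T j₂ (g (T j₂))) j P := by
  rw [Function.update_of_ne (Ne.symm h), Function.update_comm h]

lemma upd_same {p : ℕ} (T : Fin p → (Fin (m + 1) → V)) (j : Fin p)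
    (P : Fin (m + 1) → V) (g : (Fin (m + 1) → V) → Fin (m + 1) → V) :
    Function.update (Function.update T j P) j
      (g (Function.update T j P j)) = Function.update T j (g P) := by
  rw [Function.update_self, Function.update_idem]

lemma dbl_swap {p : ℕ} (b : (Fin (m + 2) → V) → V)
    (α : ((Fin p → (Fin (m + 1) → V)) × V) → ℝ)
    (T : Fin p → (Fin (m + 1) → V)) (x : V)
    (A Bb : Fin (m + 1) → V) {j j₂ : Fin p} (h : j ≠ j₂) :
    dbl b α T x A Bb j j₂ = dbl b α T x Bb A j₂ j := by
  unfold dbl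
  have e1 : ∀ k k₂ : Fin (m + 1),
      Function.update (Function.update T j (cc b A (T j) k)) j₂
        (cc b Bb (Function.update T j (cc b A (T j) k) j₂) k₂)
      = Function.update (Function.update T j₂ (cc b Bb (T j₂) k₂)) j (cc b A (T j) k) :=
    fun k k₂ => upd_swap T h (cc b A (T j) k) (fun P => cc b Bb P k₂)
  have e2 : ∀ k k₂ : Fin (m + 1),
      Function.update (Function.update T j₂ (cc b Bb (T j₂) k)) j
        (cc b A (Function.update T j₂ (cc b Bb (T j₂) k) j) k₂)
      = Function.update (Function.update T j₂ (cc b Bb (T j₂) k)) j (cc b A (T j) k₂) :=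
    fun k k₂ => by rw [Function.update_of_ne h]
  simp only [e1, e2]
  rw [Finset.sum_comm]

lemma dbl_diag {p : ℕ} (b : (Fin (m + 2) → V) → V)
    (α : ((Fin p → (Fin (m + 1) → V)) × V) → ℝ)
    (T : Fin p → (Fin (m + 1) → V)) (x : V)
    (A Bb : Fin (m + 1) → V) (j : Fin p) :
    dbl b α T x A Bb j j = ∑ k : Fin (m + 1), ∑ k₂ : Fin (m + 1),
      α (Function.update T j (cc b Bb (cc b A (T j) k) k₂), x) := by
  unfold dbl
  refine Finset.sum_congr rfl fun k _ => Finset.sum_congr rfl fun k₂ _ => ?_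
  rw [upd_same T j (cc b A (T j) k) (fun P => cc b Bb P k₂)]

lemma key {p : ℕ} (b : (Fin (m + 2) → V) → V)
    (α : ((Fin p → (Fin (m + 1) → V)) × V) → ℝ)
    (hFI' : ∀ (A B : Fin (m + 1) → V) (y : V),
      aa b A (aa b B y) = (∑ k : Fin (m + 1), aa b (cc b A B k) y) + aa b B (aa b A y))
    (hα_blocks : ∀ (X : Fin p → (Fin (m + 1) → V)) (i : Fin p) (k : Fin (m + 1))
      (v w : V) (c : ℝ) (x : V),
      α (Function.update X i (Function.update (X i) k (v + w)), x) =
          α (Function.update X i (Function.update (X i) k v), x) +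
            α (Function.update X i (Function.update (X i) k w), x) ∧
        α (Function.update X i (Function.update (X i) k (c • v)), x) =
          c • α (Function.update X i (Function.update (X i) k v), x))
    (hα_last : ∀ (X : Fin p → (Fin (m + 1) → V)) (v w : V) (c : ℝ),
      α (X, v + w) = α (X, v) + α (X, w) ∧ α (X, c • v) = c • α (X, v))
    (U W : Finset (Fin p)) (hUW : W ⊆ U)
    (T : Fin p → (Fin (m + 1) → V)) (A Bb : Fin (m + 1) → V) (x : V) :
    ((∑ j ∈ U, ∑ k : Fin (m + 1),
       ((∑ j₂ ∈ W, ∑ k₂ : Fin (m + 1),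
           α (Function.update (Function.update T j (cc b A (T j) k)) j₂
               (cc b Bb (Function.update T j (cc b A (T j) k) j₂) k₂), x))
        + α (Function.update T j (cc b A (T j) k), aa b Bb x)))
    + (∑ k : Fin (m + 1),
       ((∑ j₂ ∈ W, ∑ k₂ : Fin (m + 1),
           α (Function.update T j₂ (cc b (cc b A Bb k) (T j₂) k₂), x))
        + α (T, aa b (cc b A Bb k) x))))
    + ((∑ j₂ ∈ W, ∑ k₂ : Fin (m + 1),
           α (Function.update T j₂ (cc b Bb (T j₂) k₂), aa b A x))
        + α (T, aa b Bb (aa b A x)))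
    = ((∑ j ∈ W, ∑ k : Fin (m + 1),
       ((∑ j₂ ∈ U, ∑ k₂ : Fin (m + 1),
           α (Function.update (Function.update T j (cc b Bb (T j) k)) j₂
               (cc b A (Function.update T j (cc b Bb (T j) k) j₂) k₂), x))
        + α (Function.update T j (cc b Bb (T j) k), aa b A x)))
    + ((∑ j₂ ∈ U, ∑ k₂ : Fin (m + 1),
           α (Function.update T j₂ (cc b A (T j₂) k₂), aa b Bb x))
        + α (T, aa b A (aa b Bb x)))) := by
  classical
  simp only [Finset.sum_add_distrib]
  -- module part: L4 + L6 = R4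
  have hmod :
      (∑ k : Fin (m + 1), α (T, aa b (cc b A Bb k) x)) + α (T, aa b Bb (aa b A x))
        = α (T, aa b A (aa b Bb x)) := by
    set f : V →+ ℝ := AddMonoidHom.mk' (fun y => α (T, y)) (fun y z => (hα_last T y z 0).1)
      with hf
    have hfa : ∀ y, α (T, y) = f y := fun _ => rfl
    simp only [hfa]
    rw [hFI' A Bb x, map_add, map_sum]
  -- block part: L1 + L3 = R1
  have hblk :
      (∑ j ∈ U, ∑ k : Fin (m + 1), ∑ j₂ ∈ W, ∑ k₂ : Fin (m + 1),
           α (Function.update (Function.update T j (cc b A (T j) k)) j₂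
               (cc b Bb (Function.update T j (cc b A (T j) k) j₂) k₂), x))
      + (∑ k : Fin (m + 1), ∑ j₂ ∈ W, ∑ k₂ : Fin (m + 1),
           α (Function.update T j₂ (cc b (cc b A Bb k) (T j₂) k₂), x))
      = (∑ j ∈ W, ∑ k : Fin (m + 1), ∑ j₂ ∈ U, ∑ k₂ : Fin (m + 1),
           α (Function.update (Function.update T j (cc b Bb (T j) k)) j₂
               (cc b A (Function.update T j (cc b Bb (T j) k) j₂) k₂), x)) := by
    have hL1 : (∑ j ∈ U, ∑ k : Fin (m + 1), ∑ j₂ ∈ W, ∑ k₂ : Fin (m + 1),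
           α (Function.update (Function.update T j (cc b A (T j) k)) j₂
               (cc b Bb (Function.update T j (cc b A (T j) k) j₂) k₂), x))
        = ∑ j ∈ U, ∑ j₂ ∈ W, dbl b α T x A Bb j j₂ :=
      Finset.sum_congr rfl fun j _ => Finset.sum_comm
    have hR1 : (∑ j ∈ W, ∑ k : Fin (m + 1), ∑ j₂ ∈ U, ∑ k₂ : Fin (m + 1),
           α (Function.update (Function.update T j (cc b Bb (T j) k)) j₂
               (cc b A (Function.update T j (cc b Bb (T j) k) j₂) k₂), x))
        = ∑ j ∈ W, ∑ j₂ ∈ U, dbl b α T x Bb A j j₂ :=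
      Finset.sum_congr rfl fun j _ => Finset.sum_comm
    have hL3 : (∑ k : Fin (m + 1), ∑ j₂ ∈ W, ∑ k₂ : Fin (m + 1),
           α (Function.update T j₂ (cc b (cc b A Bb k) (T j₂) k₂), x))
        = ∑ j ∈ W, ∑ k : Fin (m + 1), ∑ k₂ : Fin (m + 1),
           α (Function.update T j (cc b (cc b A Bb k) (T j) k₂), x) :=
      Finset.sum_comm
    rw [hL1, hR1, hL3]
    -- extract diagonals
    have hsplitL : (∑ j ∈ U, ∑ j₂ ∈ W, dbl b α T x A Bb j j₂)
        = (∑ j ∈ W, dbl b α T x A Bb j j)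
          + ∑ j ∈ U, ∑ j₂ ∈ W.erase j, dbl b α T x A Bb j j₂ := by
      have : ∀ j ∈ U, (∑ j₂ ∈ W, dbl b α T x A Bb j j₂)
          = (if j ∈ W then dbl b α T x A Bb j j else 0)
            + ∑ j₂ ∈ W.erase j, dbl b α T x A Bb j j₂ :=
        fun j _ => sum_extract W j _
      rw [Finset.sum_congr rfl this, Finset.sum_add_distrib, Finset.sum_ite_mem,
        Finset.inter_eq_right.mpr hUW]
    have hsplitR : (∑ j ∈ W, ∑ j₂ ∈ U, dbl b α T x Bb A j j₂)
        = (∑ j ∈ W, dbl b α T x Bb A j j)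
          + ∑ j ∈ W, ∑ j₂ ∈ U.erase j, dbl b α T x Bb A j j₂ := by
      have : ∀ j ∈ W, (∑ j₂ ∈ U, dbl b α T x Bb A j j₂)
          = (if j ∈ U then dbl b α T x Bb A j j else 0)
            + ∑ j₂ ∈ U.erase j, dbl b α T x Bb A j j₂ :=
        fun j _ => sum_extract U j _
      rw [Finset.sum_congr rfl this, Finset.sum_add_distrib, Finset.sum_ite_mem,
        Finset.inter_eq_left.mpr hUW]
    rw [hsplitL, hsplitR]
    have hoff : (∑ j ∈ U, ∑ j₂ ∈ W.erase j, dbl b α T x A Bb j j₂)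
        = ∑ j ∈ W, ∑ j₂ ∈ U.erase j, dbl b α T x Bb A j j₂ :=
      offdiag_swap U W _ _ (fun j j₂ h => dbl_swap b α T x A Bb h)
    have hdg : (∑ j ∈ W, dbl b α T x A Bb j j)
        + (∑ j ∈ W, ∑ k : Fin (m + 1), ∑ k₂ : Fin (m + 1),
            α (Function.update T j (cc b (cc b A Bb k) (T j) k₂), x))
        = ∑ j ∈ W, dbl b α T x Bb A j j := by
      rw [← Finset.sum_add_distrib]
      refine Finset.sum_congr rfl fun j _ => ?_
      rw [dbl_diag, dbl_diag]
      exact diag_id b α hFI' hα_blocks T x A Bb j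
    linarith
  linarith [hmod, hblk]

lemma aa_comp (b : (Fin (m + 2) → V) → V)
    (hFI : ∀ (X : Fin (m + 1) → V) (y : Fin (m + 2) → V),
      b (Fin.snoc X (b y)) =
        ∑ k : Fin (m + 2), b (Function.update y k (b (Fin.snoc X (y k)))))
    (A B : Fin (m + 1) → V) (y : V) :
    aa b A (aa b B y) = (∑ k : Fin (m + 1), aa b (cc b A B k) y) + aa b B (aa b A y) := by
  have h := hFI A (Fin.snoc B y)
  simp only [aa, cc]
  rw [h, Fin.sum_univ_castSucc]
  congr 1
  · refine Finset.sum_congr rfl fun k _ => ?_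
    rw [Fin.snoc_castSucc, ← Fin.snoc_update]
  · rw [Fin.snoc_last, Fin.update_snoc_last]

/-- `key` with threshold conditions. -/
lemma key' {p : ℕ} (b : (Fin (m + 2) → V) → V)
    (α : ((Fin p → (Fin (m + 1) → V)) × V) → ℝ)
    (hFI' : ∀ (A B : Fin (m + 1) → V) (y : V),
      aa b A (aa b B y) = (∑ k : Fin (m + 1), aa b (cc b A B k) y) + aa b B (aa b A y))
    (hα_blocks : ∀ (X : Fin p → (Fin (m + 1) → V)) (i : Fin p) (k : Fin (m + 1))
      (v w : V) (c : ℝ) (x : V),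
      α (Function.update X i (Function.update (X i) k (v + w)), x) =
          α (Function.update X i (Function.update (X i) k v), x) +
            α (Function.update X i (Function.update (X i) k w), x) ∧
        α (Function.update X i (Function.update (X i) k (c • v)), x) =
          c • α (Function.update X i (Function.update (X i) k v), x))
    (hα_last : ∀ (X : Fin p → (Fin (m + 1) → V)) (v w : V) (c : ℝ),
      α (X, v + w) = α (X, v) + α (X, w) ∧ α (X, c • v) = c • α (X, v))
    (u v : ℕ) (huv : u ≤ v)
    (T : Fin p → (Fin (m + 1) → V)) (A Bb : Fin (m + 1) → V) (x : V) :
    ((∑ j : Fin p, if u ≤ (j : ℕ) then ∑ k : Fin (m + 1),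
       ((∑ j₂ : Fin p, if v ≤ (j₂ : ℕ) then ∑ k₂ : Fin (m + 1),
           α (Function.update (Function.update T j (cc b A (T j) k)) j₂
               (cc b Bb (Function.update T j (cc b A (T j) k) j₂) k₂), x) else 0)
        + α (Function.update T j (cc b A (T j) k), aa b Bb x)) else 0)
    + (∑ k : Fin (m + 1),
       ((∑ j₂ : Fin p, if v ≤ (j₂ : ℕ) then ∑ k₂ : Fin (m + 1),
           α (Function.update T j₂ (cc b (cc b A Bb k) (T j₂) k₂), x) else 0)
        + α (T, aa b (cc b A Bb k) x))))
    + ((∑ j₂ : Fin p, if v ≤ (j₂ : ℕ) then ∑ k₂ : Fin (m + 1),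
           α (Function.update T j₂ (cc b Bb (T j₂) k₂), aa b A x) else 0)
        + α (T, aa b Bb (aa b A x)))
    = ((∑ j : Fin p, if v ≤ (j : ℕ) then ∑ k : Fin (m + 1),
       ((∑ j₂ : Fin p, if u ≤ (j₂ : ℕ) then ∑ k₂ : Fin (m + 1),
           α (Function.update (Function.update T j (cc b Bb (T j) k)) j₂
               (cc b A (Function.update T j (cc b Bb (T j) k) j₂) k₂), x) else 0)
        + α (Function.update T j (cc b Bb (T j) k), aa b A x)) else 0)
    + ((∑ j₂ : Fin p, if u ≤ (j₂ : ℕ) then ∑ k₂ : Fin (m + 1),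
           α (Function.update T j₂ (cc b A (T j₂) k₂), aa b Bb x) else 0)
        + α (T, aa b A (aa b Bb x)))) := by
  classical
  have h := key b α hFI' hα_blocks hα_last
    (Finset.univ.filter (fun j : Fin p => u ≤ (j : ℕ)))
    (Finset.univ.filter (fun j : Fin p => v ≤ (j : ℕ)))
    (fun j hj => by
      simp only [Finset.mem_filter, Finset.mem_univ, true_and] at hj ⊢
      omega)
    T A Bb x
  simpa only [Finset.sum_filter] using h

/-- The `i`-th "coface" operator. -/
noncomputable def Dface (b : (Fin (m + 2) → V) → V) (q : ℕ) (i : Fin (q + 1))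
    (β : ((Fin q → (Fin (m + 1) → V)) × V) → ℝ) :
    ((Fin (q + 1) → (Fin (m + 1) → V)) × V) → ℝ :=
  fun Xx =>
    (∑ j : Fin (q + 1),
      if (i : ℕ) < (j : ℕ) then
        ∑ k : Fin (m + 1),
          β (i.removeNth (Function.update Xx.1 j
              (Function.update (Xx.1 j) k (b (Fin.snoc (Xx.1 i) (Xx.1 j k))))), Xx.2)
      else 0) +
    β (i.removeNth Xx.1, b (Fin.snoc (Xx.1 i) Xx.2))

lemma delta_eq (b : (Fin (m + 2) → V) → V) (q : ℕ) (β : NLCochain m q V)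
    (Xx : (Fin (q + 1) → (Fin (m + 1) → V)) × V) :
    NLdelta m b q β Xx = ∑ i : Fin (q + 1), ((-1 : ℤ) ^ (i : ℕ)) • Dface b q i β Xx := by
  simp only [NLdelta, Dface, smul_add, Finset.sum_add_distrib, Finset.smul_sum,
    smul_ite, smul_zero]

lemma coe_succAbove {n : ℕ} (q : Fin (n + 1)) (l : Fin n) :
    ((q.succAbove l : Fin (n + 1)) : ℕ) = if (l : ℕ) < (q : ℕ) then (l : ℕ) else (l : ℕ) + 1 := by
  rcases lt_or_ge (Fin.castSucc l) q with h | h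
  · rw [Fin.succAbove_of_castSucc_lt _ _ h]
    have : (l : ℕ) < (q : ℕ) := by simpa [Fin.lt_def] using h
    simp [this]
  · rw [Fin.succAbove_of_le_castSucc _ _ h]
    have : ¬ (l : ℕ) < (q : ℕ) := by
      have := h
      rw [Fin.le_def] at this
      simp at this
      omega
    simp [this]

lemma removeNth_update' {n : ℕ} {γ : Sort*} (i : Fin (n + 1)) (f : Fin (n + 1) → γ)
    (j : Fin n) (w : γ) :
    i.removeNth (Function.update f (i.succAbove j) w) = Function.update (i.removeNth f) j w := by
  ext l
  show Function.update f (i.succAbove j) w (i.succAbove l) = _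
  rcases eq_or_ne l j with rfl | h
  · rw [Function.update_self, Function.update_self]
  · rw [Function.update_of_ne (fun hc => h (Fin.succAbove_right_injective hc)),
      Function.update_of_ne h]
    rfl

lemma removeNth_removeNth {n : ℕ} {γ : Type*} (u v : Fin (n + 1)) (huv : (u : ℕ) ≤ (v : ℕ))
    (X : Fin (n + 2) → γ) :
    v.removeNth (u.castSucc.removeNth X) = u.removeNth (v.succ.removeNth X) := by
  ext l
  show X (u.castSucc.succAbove (v.succAbove l)) = X (v.succ.succAbove (u.succAbove l))
  congr 1
  apply Fin.ext
  rw [coe_succAbove, coe_succAbove, coe_succAbove, coe_succAbove]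
  simp only [Fin.coe_castSucc, Fin.val_succ]
  split_ifs <;> omega

lemma Dface_apply (b : (Fin (m + 2) → V) → V) (q : ℕ) (i : Fin (q + 1))
    (β : ((Fin q → (Fin (m + 1) → V)) × V) → ℝ)
    (X : Fin (q + 1) → (Fin (m + 1) → V)) (x : V) :
    Dface b q i β (X, x)
      = (∑ j : Fin q, if (i : ℕ) ≤ (j : ℕ) then
          ∑ k : Fin (m + 1),
            β (Function.update (i.removeNth X) j (cc b (X i) ((i.removeNth X) j) k), x)
          else 0)
        + β (i.removeNth X, aa b (X i) x) := by
  unfold Dface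
  dsimp only
  congr 1
  rw [Fin.sum_univ_succ]
  have h0 : ¬ (i : ℕ) < ((0 : Fin (q + 1)) : ℕ) := by simp
  rw [if_neg h0, zero_add]
  refine Finset.sum_congr rfl fun j _ => ?_
  by_cases h : (i : ℕ) ≤ (j : ℕ)
  · rw [if_pos (by simpa using Nat.lt_succ_of_le h), if_pos h]
    have hsA : i.succAbove j = j.succ :=
      Fin.succAbove_of_le_castSucc i j (by rw [Fin.le_def]; simpa using h)
    rw [← hsA]
    refine Finset.sum_congr rfl fun k _ => ?_
    rw [removeNth_update']
    rfl
  · rw [if_neg (by simpa using fun hc => h (Nat.lt_succ_iff.mp hc)), if_neg h]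

lemma core' {p : ℕ} (b : (Fin (m + 2) → V) → V)
    (α : ((Fin p → (Fin (m + 1) → V)) × V) → ℝ)
    (hFI' : ∀ (A B : Fin (m + 1) → V) (y : V),
      aa b A (aa b B y) = (∑ k : Fin (m + 1), aa b (cc b A B k) y) + aa b B (aa b A y))
    (hα_blocks : ∀ (X : Fin p → (Fin (m + 1) → V)) (i : Fin p) (k : Fin (m + 1))
      (v w : V) (c : ℝ) (x : V),
      α (Function.update X i (Function.update (X i) k (v + w)), x) =
          α (Function.update X i (Function.update (X i) k v), x) +
            α (Function.update X i (Function.update (X i) k w), x) ∧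
        α (Function.update X i (Function.update (X i) k (c • v)), x) =
          c • α (Function.update X i (Function.update (X i) k v), x))
    (hα_last : ∀ (X : Fin p → (Fin (m + 1) → V)) (v w : V) (c : ℝ),
      α (X, v + w) = α (X, v) + α (X, w) ∧ α (X, c • v) = c • α (X, v))
    (u v : Fin (p + 1)) (huv : (u : ℕ) ≤ (v : ℕ))
    (A Bb : Fin (m + 1) → V) (Z Z' : Fin (p + 1) → (Fin (m + 1) → V)) (x : V)
    (hZv : Z v = Bb) (hZ'u : Z' u = A) (hT' : u.removeNth Z' = v.removeNth Z) :
    (∑ j : Fin (p + 1), if (u : ℕ) ≤ (j : ℕ) then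
        ∑ k : Fin (m + 1), Dface b p v α (Function.update Z j (cc b A (Z j) k), x) else 0)
      + Dface b p v α (Z, aa b A x)
    = (∑ j : Fin (p + 1), if (v : ℕ) + 1 ≤ (j : ℕ) then
        ∑ k : Fin (m + 1), Dface b p u α (Function.update Z' j (cc b Bb (Z' j) k), x) else 0)
      + Dface b p u α (Z', aa b Bb x) := by
  classical
  have hZl : ∀ l : Fin p, Z' (u.succAbove l) = v.removeNth Z l := fun l => congrFun hT' l
  -- split the two outer sums
  rw [Fin.sum_univ_succAbove
    (fun j => if (u : ℕ) ≤ (j : ℕ) then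
        ∑ k : Fin (m + 1), Dface b p v α (Function.update Z j (cc b A (Z j) k), x) else 0) v]
  rw [Fin.sum_univ_succAbove
    (fun j => if (v : ℕ) + 1 ≤ (j : ℕ) then
        ∑ k : Fin (m + 1), Dface b p u α (Function.update Z' j (cc b Bb (Z' j) k), x) else 0) u]
  rw [if_pos huv, if_neg (by omega : ¬ ((v : ℕ) + 1 ≤ (u : ℕ)))]
  -- normalize the succAbove conditions
  have hc1 : ∀ l : Fin p,
      ((u : ℕ) ≤ ((v.succAbove l : Fin (p + 1)) : ℕ)) = ((u : ℕ) ≤ (l : ℕ)) :=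
    fun l => propext (by rw [coe_succAbove]; constructor <;> (intro; split_ifs at * <;> omega))
  have hc2 : ∀ l : Fin p,
      ((v : ℕ) + 1 ≤ ((u.succAbove l : Fin (p + 1)) : ℕ)) = ((v : ℕ) ≤ (l : ℕ)) :=
    fun l => propext (by rw [coe_succAbove]; constructor <;> (intro; split_ifs at * <;> omega))
  simp only [hc1, hc2]
  -- expand the inner coboundaries
  have exp1 : ∀ k : Fin (m + 1),
      Dface b p v α (Function.update Z v (cc b A (Z v) k), x)
      = (∑ j₂ : Fin p, if (v : ℕ) ≤ (j₂ : ℕ) then ∑ k₂ : Fin (m + 1),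
            α (Function.update (v.removeNth Z) j₂
                (cc b (cc b A Bb k) (v.removeNth Z j₂) k₂), x) else 0)
        + α (v.removeNth Z, aa b (cc b A Bb k) x) := by
    intro k
    rw [Dface_apply, Fin.removeNth_update, Function.update_self, hZv]
  have exp2 : ∀ (l : Fin p) (k : Fin (m + 1)),
      Dface b p v α (Function.update Z (v.succAbove l) (cc b A (Z (v.succAbove l)) k), x)
      = (∑ j₂ : Fin p, if (v : ℕ) ≤ (j₂ : ℕ) then ∑ k₂ : Fin (m + 1),
            α (Function.update (Function.update (v.removeNth Z) l
                  (cc b A (v.removeNth Z l) k)) j₂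
                (cc b Bb (Function.update (v.removeNth Z) l
                  (cc b A (v.removeNth Z l) k) j₂) k₂), x) else 0)
        + α (Function.update (v.removeNth Z) l (cc b A (v.removeNth Z l) k), aa b Bb x) := by
    intro l k
    rw [Dface_apply, removeNth_update',
      Function.update_of_ne (Fin.succAbove_ne v l).symm, hZv]
    rfl
  have exp3 : Dface b p v α (Z, aa b A x)
      = (∑ j₂ : Fin p, if (v : ℕ) ≤ (j₂ : ℕ) then ∑ k₂ : Fin (m + 1),
            α (Function.update (v.removeNth Z) j₂
                (cc b Bb (v.removeNth Z j₂) k₂), aa b A x) else 0)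
        + α (v.removeNth Z, aa b Bb (aa b A x)) := by
    rw [Dface_apply, hZv]
  have exp2' : ∀ (l : Fin p) (k : Fin (m + 1)),
      Dface b p u α (Function.update Z' (u.succAbove l) (cc b Bb (Z' (u.succAbove l)) k), x)
      = (∑ j₂ : Fin p, if (u : ℕ) ≤ (j₂ : ℕ) then ∑ k₂ : Fin (m + 1),
            α (Function.update (Function.update (v.removeNth Z) l
                  (cc b Bb (v.removeNth Z l) k)) j₂
                (cc b A (Function.update (v.removeNth Z) l
                  (cc b Bb (v.removeNth Z l) k) j₂) k₂), x) else 0)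
        + α (Function.update (v.removeNth Z) l (cc b Bb (v.removeNth Z l) k), aa b A x) := by
    intro l k
    rw [Dface_apply, removeNth_update',
      Function.update_of_ne (Fin.succAbove_ne u l).symm, hZ'u, hZl l, hT']
  have exp3' : Dface b p u α (Z', aa b Bb x)
      = (∑ j₂ : Fin p, if (u : ℕ) ≤ (j₂ : ℕ) then ∑ k₂ : Fin (m + 1),
            α (Function.update (v.removeNth Z) j₂
                (cc b A (v.removeNth Z j₂) k₂), aa b Bb x) else 0)
        + α (v.removeNth Z, aa b A (aa b Bb x)) := by
    rw [Dface_apply, hZ'u, hT']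
  have e1 : (∑ k : Fin (m + 1), Dface b p v α (Function.update Z v (cc b A (Z v) k), x))
      = ∑ k : Fin (m + 1),
          ((∑ j₂ : Fin p, if (v : ℕ) ≤ (j₂ : ℕ) then ∑ k₂ : Fin (m + 1),
            α (Function.update (v.removeNth Z) j₂
                (cc b (cc b A Bb k) (v.removeNth Z j₂) k₂), x) else 0)
          + α (v.removeNth Z, aa b (cc b A Bb k) x)) :=
    Finset.sum_congr rfl fun k _ => exp1 k
  have e2 : (∑ l : Fin p, if (u : ℕ) ≤ (l : ℕ) then
        ∑ k : Fin (m + 1),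
          Dface b p v α (Function.update Z (v.succAbove l)
            (cc b A (Z (v.succAbove l)) k), x) else 0)
      = ∑ l : Fin p, if (u : ℕ) ≤ (l : ℕ) then
          ∑ k : Fin (m + 1),
          ((∑ j₂ : Fin p, if (v : ℕ) ≤ (j₂ : ℕ) then ∑ k₂ : Fin (m + 1),
            α (Function.update (Function.update (v.removeNth Z) l
                  (cc b A (v.removeNth Z l) k)) j₂
                (cc b Bb (Function.update (v.removeNth Z) l
                  (cc b A (v.removeNth Z l) k) j₂) k₂), x) else 0)
          + α (Function.update (v.removeNth Z) l (cc b A (v.removeNth Z l) k), aa b Bb x))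
          else 0 :=
    Finset.sum_congr rfl fun l _ =>
      if_congr Iff.rfl (Finset.sum_congr rfl fun k _ => exp2 l k) rfl
  have e2' : (∑ l : Fin p, if (v : ℕ) ≤ (l : ℕ) then
        ∑ k : Fin (m + 1),
          Dface b p u α (Function.update Z' (u.succAbove l)
            (cc b Bb (Z' (u.succAbove l)) k), x) else 0)
      = ∑ l : Fin p, if (v : ℕ) ≤ (l : ℕ) then
          ∑ k : Fin (m + 1),
          ((∑ j₂ : Fin p, if (u : ℕ) ≤ (j₂ : ℕ) then ∑ k₂ : Fin (m + 1),
            α (Function.update (Function.update (v.removeNth Z) l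
                  (cc b Bb (v.removeNth Z l) k)) j₂
                (cc b A (Function.update (v.removeNth Z) l
                  (cc b Bb (v.removeNth Z l) k) j₂) k₂), x) else 0)
          + α (Function.update (v.removeNth Z) l (cc b Bb (v.removeNth Z l) k), aa b A x))
          else 0 :=
    Finset.sum_congr rfl fun l _ =>
      if_congr Iff.rfl (Finset.sum_congr rfl fun k _ => exp2' l k) rfl
  rw [e1, e2, e2', exp3, exp3']
  have hk := key' b α hFI' hα_blocks hα_last (u : ℕ) (v : ℕ) huv (v.removeNth Z) A Bb x
  linarith [hk]

lemma core {p : ℕ} (b : (Fin (m + 2) → V) → V)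
    (α : ((Fin p → (Fin (m + 1) → V)) × V) → ℝ)
    (hFI' : ∀ (A B : Fin (m + 1) → V) (y : V),
      aa b A (aa b B y) = (∑ k : Fin (m + 1), aa b (cc b A B k) y) + aa b B (aa b A y))
    (hα_blocks : ∀ (X : Fin p → (Fin (m + 1) → V)) (i : Fin p) (k : Fin (m + 1))
      (v w : V) (c : ℝ) (x : V),
      α (Function.update X i (Function.update (X i) k (v + w)), x) =
          α (Function.update X i (Function.update (X i) k v), x) +
            α (Function.update X i (Function.update (X i) k w), x) ∧
        α (Function.update X i (Function.update (X i) k (c • v)), x) =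
          c • α (Function.update X i (Function.update (X i) k v), x))
    (hα_last : ∀ (X : Fin p → (Fin (m + 1) → V)) (v w : V) (c : ℝ),
      α (X, v + w) = α (X, v) + α (X, w) ∧ α (X, c • v) = c • α (X, v))
    (u v : Fin (p + 1)) (huv : (u : ℕ) ≤ (v : ℕ))
    (X : Fin (p + 2) → (Fin (m + 1) → V)) (x : V) :
    Dface b (p + 1) u.castSucc (Dface b p v α) (X, x)
      = Dface b (p + 1) v.succ (Dface b p u α) (X, x) := by
  rw [Dface_apply b (p + 1) u.castSucc (Dface b p v α) X x,
    Dface_apply b (p + 1) v.succ (Dface b p u α) X x]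
  simp only [Fin.coe_castSucc, Fin.val_succ]
  have hZv : (u.castSucc.removeNth X) v = X v.succ := by
    show X (u.castSucc.succAbove v) = X v.succ
    rw [Fin.succAbove_of_le_castSucc _ _
      (Fin.castSucc_le_castSucc_iff.mpr (Fin.le_def.mpr huv))]
  have hZ'u : (v.succ.removeNth X) u = X u.castSucc := by
    show X (v.succ.succAbove u) = X u.castSucc
    rw [Fin.succAbove_of_castSucc_lt _ _ (by rw [Fin.lt_def]; simp; omega)]
  exact core' b α hFI' hα_blocks hα_last u v huv (X u.castSucc) (X v.succ)
    (u.castSucc.removeNth X) (v.succ.removeNth X) x hZv hZ'u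
    (removeNth_removeNth u v huv X).symm

lemma Dface_linear {q n : ℕ} (b : (Fin (m + 2) → V) → V) (i' : Fin (q + 1)) (c : Fin n → ℤ)
    (f : Fin n → ((Fin q → (Fin (m + 1) → V)) × V) → ℝ)
    (Xx : (Fin (q + 1) → (Fin (m + 1) → V)) × V) :
    Dface b q i' (fun Yy => ∑ i : Fin n, (c i) • f i Yy) Xx
      = ∑ i : Fin n, (c i) • Dface b q i' (f i) Xx := by
  unfold Dface
  simp only [smul_add, Finset.sum_add_distrib, Finset.smul_sum, smul_ite, smul_zero]
  congr 1
  refine Eq.trans (Finset.sum_congr rfl fun j _ => ?_) Finset.sum_comm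
  by_cases h : (i' : ℕ) < (j : ℕ)
  · simp only [if_pos h]
    rw [Finset.sum_comm]
  · simp only [if_neg h, Finset.sum_const_zero]

end NLnil

/-- for a Nambu-Lie algebra `V` of order `s = m+2`, the coboundary operator `δₛ`
on multilinear `p`-cochains satisfies `δₛ² = 0`. -/
theorem nambu_lie_cohomology_nilpotent
    (m : ℕ) (V : Type*) [AddCommGroup V] [Module ℝ V]
    (b : (Fin (m + 2) → V) → V)
    (hanti : ∀ (σ : Equiv.Perm (Fin (m + 2))) (f : Fin (m + 2) → V),
      b (f ∘ σ) = (Equiv.Perm.sign σ : ℤ) • b f)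
    (hmulti : ∀ (f : Fin (m + 2) → V) (k : Fin (m + 2)) (v w : V) (c : ℝ),
      b (Function.update f k (v + w)) =
          b (Function.update f k v) + b (Function.update f k w) ∧
        b (Function.update f k (c • v)) = c • b (Function.update f k v))
    (hFI : ∀ (X : Fin (m + 1) → V) (y : Fin (m + 2) → V),
      b (Fin.snoc X (b y)) =
        ∑ k : Fin (m + 2), b (Function.update y k (b (Fin.snoc X (y k)))))
    (p : ℕ) (α : NLCochain m p V)
    -- multilinearity of the cochain `α` in each of its `p(s-1)+1` arguments:
    (hα_blocks : ∀ (X : Fin p → (Fin (m + 1) → V)) (i : Fin p) (k : Fin (m + 1))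
      (v w : V) (c : ℝ) (x : V),
      α (Function.update X i (Function.update (X i) k (v + w)), x) =
          α (Function.update X i (Function.update (X i) k v), x) +
            α (Function.update X i (Function.update (X i) k w), x) ∧
        α (Function.update X i (Function.update (X i) k (c • v)), x) =
          c • α (Function.update X i (Function.update (X i) k v), x))
    (hα_last : ∀ (X : Fin p → (Fin (m + 1) → V)) (v w : V) (c : ℝ),
      α (X, v + w) = α (X, v) + α (X, w) ∧ α (X, c • v) = c • α (X, v)) :
    ∀ Xx, NLdelta m b (p + 1) (NLdelta m b p α) Xx = 0 := by
  intro Xx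
  obtain ⟨X, x⟩ := Xx
  have hFI' := NLnil.aa_comp b hFI
  rw [NLnil.delta_eq b (p + 1) (NLdelta m b p α) (X, x)]
  have hβ : NLdelta m b p α
      = fun Yy => ∑ i : Fin (p + 1), ((-1 : ℤ) ^ (i : ℕ)) • NLnil.Dface b p i α Yy :=
    funext (NLnil.delta_eq b p α)
  rw [hβ]
  simp only [NLnil.Dface_linear, Finset.smul_sum, smul_smul, ← pow_add]
  rw [← Finset.sum_product']
  refine Finset.sum_ninvolution
    (fun z : Fin (p + 2) × Fin (p + 1) =>
      if h : (z.1 : ℕ) ≤ (z.2 : ℕ) then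
        (z.2.succ, (⟨(z.1 : ℕ), lt_of_le_of_lt h z.2.isLt⟩ : Fin (p + 1)))
      else
        (Fin.castSucc z.2, (⟨(z.1 : ℕ) - 1, by have := z.1.isLt; omega⟩ : Fin (p + 1))))
    ?_ ?_ (fun z => Finset.mem_product.mpr ⟨Finset.mem_univ _, Finset.mem_univ _⟩) ?_
  · -- cancellation
    intro z
    by_cases h : (z.1 : ℕ) ≤ (z.2 : ℕ)
    · rw [dif_pos h]
      have hcast : (⟨(z.1 : ℕ), lt_of_le_of_lt h z.2.isLt⟩ : Fin (p + 1)).castSucc = z.1 :=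
        Fin.ext rfl
      have hcore := NLnil.core b α hFI' hα_blocks hα_last
        ⟨(z.1 : ℕ), lt_of_le_of_lt h z.2.isLt⟩ z.2 h X x
      rw [hcast] at hcore
      rw [← hcore]
      simp only [Fin.val_succ]
      rw [show ((z.2 : ℕ) + 1 + (z.1 : ℕ)) = ((z.1 : ℕ) + (z.2 : ℕ)) + 1 from by omega,
        pow_succ, mul_neg_one, neg_smul, add_neg_cancel]
    · rw [dif_neg h]
      have hlt : (z.2 : ℕ) ≤ (z.1 : ℕ) - 1 := by omega
      have hcore := NLnil.core b α hFI' hα_blocks hα_last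
        z.2 ⟨(z.1 : ℕ) - 1, by have := z.1.isLt; omega⟩ hlt X x
      have hsucc : (⟨(z.1 : ℕ) - 1, by have := z.1.isLt; omega⟩ : Fin (p + 1)).succ = z.1 :=
        Fin.ext (by simp [Fin.val_succ]; omega)
      rw [hsucc] at hcore
      rw [hcore]
      simp only [Fin.coe_castSucc]
      rw [show ((z.1 : ℕ) + (z.2 : ℕ)) = ((z.2 : ℕ) + ((z.1 : ℕ) - 1)) + 1 from by omega,
        pow_succ, mul_neg_one, neg_smul, neg_add_cancel]
  · -- never fixed
    intro z _
    by_cases h : (z.1 : ℕ) ≤ (z.2 : ℕ)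
    · rw [dif_pos h]
      intro heq
      have := congrArg (fun w : Fin (p + 2) × Fin (p + 1) => ((w.1 : Fin (p + 2)) : ℕ)) heq
      simp only [Fin.val_succ] at this
      omega
    · rw [dif_neg h]
      intro heq
      have := congrArg (fun w : Fin (p + 2) × Fin (p + 1) => ((w.1 : Fin (p + 2)) : ℕ)) heq
      simp only [Fin.coe_castSucc] at this
      omega
  · -- involution
    intro z
    by_cases h : (z.1 : ℕ) ≤ (z.2 : ℕ)
    · rw [dif_pos h, dif_neg (by simp [Fin.val_succ]; omega)]
      refine Prod.ext (Fin.ext ?_) (Fin.ext ?_) <;> simp [Fin.val_succ]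
    · rw [dif_neg h, dif_pos (by simp [Fin.coe_castSucc]; omega)]
      refine Prod.ext (Fin.ext ?_) (Fin.ext ?_) <;> simp [Fin.coe_castSucc] <;> omega
end

section
/- If the components of a generalized Poisson multivector are of the form ω_{i_1...i_{2m-2}} = ∂^l ω̃_{l i_1...i_{2m-2}} with ω̃ a smooth completely antisymmetric (2m−1)-tensor, then the evolution velocity field ẋ_j = ω_{i_1...i_{2m-3}j} ∂^{i_1}H_1 ··· ∂^{i_{2m-3}}H_{2m-3} has vanishing divergence. -/
section Helpers

variable {d : ℕ}

lemma pd_smooth {f : (Fin d → ℝ) → ℝ} (hf : ContDiff ℝ (⊤ : ℕ∞) f) (ρ : Fin d) :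
    ContDiff ℝ (⊤ : ℕ∞) (pd ρ f) :=
  (hf.fderiv_right (by simp)).clm_apply contDiff_const

lemma pd_sum {ι : Type*} (s : Finset ι) (f : ι → (Fin d → ℝ) → ℝ) (ρ : Fin d)
    (x : Fin d → ℝ) (hf : ∀ i ∈ s, DifferentiableAt ℝ (f i) x) :
    pd ρ (fun y => ∑ i ∈ s, f i y) x = ∑ i ∈ s, pd ρ (f i) x := by
  simp only [pd]
  rw [fderiv_fun_sum hf]
  simp

lemma pd_mul {f g : (Fin d → ℝ) → ℝ} (ρ : Fin d) (x : Fin d → ℝ)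
    (hf : DifferentiableAt ℝ f x) (hg : DifferentiableAt ℝ g x) :
    pd ρ (fun y => f y * g y) x = pd ρ f x * g x + f x * pd ρ g x := by
  simp only [pd]
  rw [fderiv_fun_mul hf hg]
  simp
  ring

lemma pd_neg {f : (Fin d → ℝ) → ℝ} (ρ : Fin d) :
    pd ρ (fun y => -f y) = fun x => -pd ρ f x := by
  funext x
  simp [pd, fderiv_neg]

lemma pd_pd {f : (Fin d → ℝ) → ℝ} (hf : ContDiff ℝ (⊤ : ℕ∞) f) (ρ σ : Fin d) (x : Fin d → ℝ) :
    pd ρ (pd σ f) x = fderiv ℝ (fderiv ℝ f) x (Pi.single ρ 1) (Pi.single σ 1) := by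
  have hdf : Differentiable ℝ (fderiv ℝ f) := (hf.fderiv_right (m := 1) (by exact WithTop.coe_le_coe.mpr le_top)).differentiable one_ne_zero
  have h := (hdf x).hasFDerivAt.clm_apply (hasFDerivAt_const (Pi.single σ 1) x)
  have h2 := h.fderiv
  have hps : pd σ f = fun y => fderiv ℝ f y (Pi.single σ 1) := rfl
  simp only [pd, hps]
  rw [h2]
  simp

lemma pd_comm {f : (Fin d → ℝ) → ℝ} (hf : ContDiff ℝ (⊤ : ℕ∞) f) (ρ σ : Fin d) (x : Fin d → ℝ) :
    pd ρ (pd σ f) x = pd σ (pd ρ f) x := by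
  rw [pd_pd hf, pd_pd hf]
  have hdf : Differentiable ℝ (fderiv ℝ f) := (hf.fderiv_right (m := 1) (by exact WithTop.coe_le_coe.mpr le_top)).differentiable one_ne_zero
  exact second_derivative_symmetric (fun y => ((hf.differentiable (by simp)) y).hasFDerivAt)
    (hdf x).hasFDerivAt _ _

lemma sum_antisym {ι : Type*} [Fintype ι] (e : ι → ι) (he : Function.Involutive e)
    (f : ι → ℝ) (hf : ∀ p, f (e p) = -f p) : ∑ p, f p = 0 := by
  have h1 : ∑ p, f (e p) = ∑ p, f p := Function.Bijective.sum_comp he.bijective f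
  have h2 : ∑ p, f (e p) = -∑ p, f p := by
    rw [← Finset.sum_neg_distrib]
    exact Finset.sum_congr rfl fun p _ => hf p
  linarith [h1, h2]

lemma swap_first_last {q : ℕ} (j l : Fin d) (i : Fin (2*q+1) → Fin d) :
    (Fin.cons j (Fin.snoc i l) : Fin (2*q+3) → Fin d) ∘ (Equiv.swap 0 (Fin.last (2*q+2)))
      = Fin.cons l (Fin.snoc i j) := by
  funext a
  induction a using Fin.cases with
  | zero =>
    simp only [Function.comp_apply, Equiv.swap_apply_left, Fin.cons_zero]
    rw [show (Fin.last (2*q+2)) = Fin.succ (Fin.last (2*q+1)) from rfl, Fin.cons_succ,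
      Fin.snoc_last]
  | succ b =>
    induction b using Fin.lastCases with
    | last =>
      rw [show Fin.succ (Fin.last (2*q+1)) = Fin.last (2*q+2) from rfl]
      simp only [Function.comp_apply, Equiv.swap_apply_right, Fin.cons_zero]
      rw [show (Fin.last (2*q+2)) = Fin.succ (Fin.last (2*q+1)) from rfl, Fin.cons_succ,
        Fin.snoc_last]
    | cast c =>
      have h1 : Fin.succ (Fin.castSucc c) ≠ 0 := Fin.succ_ne_zero _
      have h2 : Fin.succ (Fin.castSucc c) ≠ Fin.last (2*q+2) := by
        rw [Fin.succ_castSucc]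
        exact (Fin.castSucc_lt_last _).ne
      simp only [Function.comp_apply, Equiv.swap_apply_of_ne_of_ne h1 h2, Fin.cons_succ,
        Fin.snoc_castSucc]

lemma swap_mid_last {q : ℕ} (k : Fin (2*q+1)) (j l : Fin d) (i : Fin (2*q+1) → Fin d) :
    (Fin.cons l (Fin.snoc i j) : Fin (2*q+3) → Fin d)
        ∘ (Equiv.swap (Fin.succ (Fin.castSucc k)) (Fin.last (2*q+2)))
      = Fin.cons l (Fin.snoc (Function.update i k j) (i k)) := by
  funext a
  induction a using Fin.cases with
  | zero =>
    have h1 : (0 : Fin (2*q+3)) ≠ Fin.succ (Fin.castSucc k) := (Fin.succ_ne_zero _).symm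
    have h2 : (0 : Fin (2*q+3)) ≠ Fin.last (2*q+2) := by
      simp [Fin.ext_iff]
    simp [Equiv.swap_apply_of_ne_of_ne h1 h2]
  | succ b =>
    induction b using Fin.lastCases with
    | last =>
      rw [show Fin.succ (Fin.last (2*q+1)) = Fin.last (2*q+2) from rfl]
      simp only [Function.comp_apply, Equiv.swap_apply_right, Fin.cons_succ, Fin.snoc_castSucc]
      rw [show (Fin.last (2*q+2)) = Fin.succ (Fin.last (2*q+1)) from rfl, Fin.cons_succ,
        Fin.snoc_last]
    | cast c =>
      by_cases hck : c = k
      · subst hck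
        simp only [Function.comp_apply, Equiv.swap_apply_left, Fin.cons_succ]
        rw [show (Fin.last (2*q+2)) = Fin.succ (Fin.last (2*q+1)) from rfl, Fin.cons_succ,
          Fin.snoc_last, Fin.snoc_castSucc, Function.update_self]
      · have h1 : Fin.succ (Fin.castSucc c) ≠ Fin.succ (Fin.castSucc k) := by
          simp [Fin.ext_iff] at *
          omega
        have h2 : Fin.succ (Fin.castSucc c) ≠ Fin.last (2*q+2) := by
          rw [Fin.succ_castSucc]
          exact (Fin.castSucc_lt_last _).ne
        simp only [Function.comp_apply, Equiv.swap_apply_of_ne_of_ne h1 h2, Fin.cons_succ,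
          Fin.snoc_castSucc, Function.update_of_ne hck]

end Helpers

/-- if the components of a generalized Poisson multivector have the form
`ω_{i₁...i_{2m-2}} = ∂^l ω̃_{l i₁...i_{2m-2}}` (order `2m-2 = 2q+2`) with `ω̃` a smooth
completely antisymmetric `(2m-1) = (2q+3)`-tensor field on `ℝ^d`, then the evolution velocity
field `ẋ_j = ω_{i₁...i_{2m-3} j} ∂^{i₁}H₁ ⋯ ∂^{i_{2m-3}}H_{2m-3}` has vanishing divergence. -/
theorem divergence_form_GPS_liouville (q d : ℕ)
    (ω' : (Fin (2 * q + 3) → Fin d) → (Fin d → ℝ) → ℝ)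
    (hsmooth : ∀ idx, ContDiff ℝ (⊤ : ℕ∞) (ω' idx))
    (hanti : ∀ (σ : Equiv.Perm (Fin (2 * q + 3))) (idx : Fin (2 * q + 3) → Fin d)
      (x : Fin d → ℝ), ω' (idx ∘ σ) x = (Equiv.Perm.sign σ : ℤ) • ω' idx x)
    (H : Fin (2 * q + 1) → ((Fin d → ℝ) → ℝ))
    (hH : ∀ k, ContDiff ℝ (⊤ : ℕ∞) (H k)) (x : Fin d → ℝ) :
    ∑ j : Fin d,
      pd j (fun y =>
        ∑ i : Fin (2 * q + 1) → Fin d,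
          (∑ l : Fin d, pd l (ω' (Fin.cons l (Fin.snoc i j))) y) *
            ∏ k : Fin (2 * q + 1), pd (i k) (H k) y) x = 0 := by
  -- antisymmetry consequences
  have h0last : (0 : Fin (2*q+3)) ≠ Fin.last (2*q+2) := by simp [Fin.ext_iff]
  have hneg1 : ∀ (i : Fin (2*q+1) → Fin d) (j l : Fin d),
      ω' (Fin.cons l (Fin.snoc i j)) = fun y => -(ω' (Fin.cons j (Fin.snoc i l)) y) := by
    intro i j l
    funext y
    have h := hanti (Equiv.swap 0 (Fin.last (2*q+2))) (Fin.cons j (Fin.snoc i l)) y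
    rw [swap_first_last] at h
    rw [h, Equiv.Perm.sign_swap h0last]
    simp
  have hneg2 : ∀ (i : Fin (2*q+1) → Fin d) (j l : Fin d) (k : Fin (2*q+1)),
      ω' (Fin.cons l (Fin.snoc (Function.update i k j) (i k)))
        = fun y => -(ω' (Fin.cons l (Fin.snoc i j)) y) := by
    intro i j l k
    funext y
    have hk : Fin.succ (Fin.castSucc k) ≠ Fin.last (2*q+2) := by
      rw [Fin.succ_castSucc]
      exact (Fin.castSucc_lt_last _).ne
    have h := hanti (Equiv.swap (Fin.succ (Fin.castSucc k)) (Fin.last (2*q+2)))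
      (Fin.cons l (Fin.snoc i j)) y
    rw [swap_mid_last] at h
    rw [h, Equiv.Perm.sign_swap hk]
    simp
  -- differentiability facts
  have hA : ∀ (i : Fin (2*q+1) → Fin d) (j : Fin d),
      Differentiable ℝ (fun y => ∑ l : Fin d, pd l (ω' (Fin.cons l (Fin.snoc i j))) y) :=
    fun i j => Differentiable.fun_sum fun l _ => (pd_smooth (hsmooth _) l).differentiable (by simp)
  have hfacD : ∀ (a : Fin d) (k : Fin (2*q+1)), Differentiable ℝ (pd a (H k)) :=
    fun a k => (pd_smooth (hH k) a).differentiable (by simp)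
  have hPfd : ∀ (i : Fin (2*q+1) → Fin d) (y : Fin d → ℝ),
      HasFDerivAt (fun z => ∏ k : Fin (2*q+1), pd (i k) (H k) z)
        (∑ k : Fin (2*q+1), (∏ k' ∈ Finset.univ.erase k, pd (i k') (H k') y) •
          fderiv ℝ (pd (i k) (H k)) y) y :=
    fun i y => HasFDerivAt.finset_prod fun k _ => (hfacD (i k) k y).hasFDerivAt
  have hPdiff : ∀ (i : Fin (2*q+1) → Fin d),
      Differentiable ℝ (fun y => ∏ k : Fin (2*q+1), pd (i k) (H k) y) :=
    fun i y => (hPfd i y).differentiableAt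
  have hprod : ∀ (i : Fin (2*q+1) → Fin d) (j : Fin d),
      pd j (fun y => ∏ k : Fin (2*q+1), pd (i k) (H k) y) x
        = ∑ k : Fin (2*q+1), (∏ k' ∈ Finset.univ.erase k, pd (i k') (H k') x) *
            pd j (pd (i k) (H k)) x := by
    intro i j
    have h2 := (hPfd i x).fderiv
    show fderiv ℝ (fun y => ∏ k : Fin (2*q+1), pd (i k) (H k) y) x (Pi.single j 1) = _
    rw [h2]
    simp [ContinuousLinearMap.sum_apply, ContinuousLinearMap.smul_apply]
    rfl
  -- expand the divergence
  have main : ∀ j : Fin d,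
      pd j (fun y => ∑ i : Fin (2 * q + 1) → Fin d,
          (∑ l : Fin d, pd l (ω' (Fin.cons l (Fin.snoc i j))) y) *
            ∏ k : Fin (2 * q + 1), pd (i k) (H k) y) x
        = ∑ i : Fin (2 * q + 1) → Fin d,
            ((∑ l : Fin d, pd j (pd l (ω' (Fin.cons l (Fin.snoc i j)))) x) *
                (∏ k : Fin (2 * q + 1), pd (i k) (H k) x)
              + (∑ l : Fin d, pd l (ω' (Fin.cons l (Fin.snoc i j))) x) *
                ∑ k : Fin (2*q+1), (∏ k' ∈ Finset.univ.erase k, pd (i k') (H k') x) *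
                  pd j (pd (i k) (H k)) x) := by
    intro j
    rw [pd_sum _ _ _ _ (fun i _ => ((hA i j) x).fun_mul ((hPdiff i) x))]
    refine Finset.sum_congr rfl fun i _ => ?_
    rw [pd_mul j x ((hA i j) x) ((hPdiff i) x),
      pd_sum _ _ _ _ (fun l _ => ((pd_smooth (hsmooth _) l).differentiable (by simp)) x),
      hprod i j]
  rw [Finset.sum_congr rfl fun j _ => main j]
  simp only [Finset.sum_add_distrib]
  -- first half vanishes
  have hT1 : ∀ i : Fin (2*q+1) → Fin d,
      ∑ j : Fin d, ∑ l : Fin d, pd j (pd l (ω' (Fin.cons l (Fin.snoc i j)))) x = 0 := by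
    intro i
    have h := sum_antisym (ι := Fin d × Fin d) (fun p => (p.2, p.1)) (fun p => rfl)
      (fun p => pd p.1 (pd p.2 (ω' (Fin.cons p.2 (Fin.snoc i p.1)))) x) ?_
    · rw [Fintype.sum_prod_type] at h
      simpa using h
    · rintro ⟨j, l⟩
      show pd l (pd j (ω' (Fin.cons j (Fin.snoc i l)))) x
        = -pd j (pd l (ω' (Fin.cons l (Fin.snoc i j)))) x
      rw [hneg1 i l j]
      simp only [pd_neg]
      rw [pd_comm (hsmooth _) l j x]
  have hZ1 : ∑ j : Fin d, ∑ i : Fin (2 * q + 1) → Fin d,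
      (∑ l : Fin d, pd j (pd l (ω' (Fin.cons l (Fin.snoc i j)))) x) *
        (∏ k : Fin (2 * q + 1), pd (i k) (H k) x) = 0 := by
    rw [Finset.sum_comm]
    refine Finset.sum_eq_zero fun i _ => ?_
    rw [← Finset.sum_mul, hT1 i, zero_mul]
  -- second half vanishes
  have hZ2 : ∑ j : Fin d, ∑ i : Fin (2 * q + 1) → Fin d,
      (∑ l : Fin d, pd l (ω' (Fin.cons l (Fin.snoc i j))) x) *
        ∑ k : Fin (2*q+1), (∏ k' ∈ Finset.univ.erase k, pd (i k') (H k') x) *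
          pd j (pd (i k) (H k)) x = 0 := by
    simp only [Finset.mul_sum]
    rw [show (∑ j : Fin d, ∑ i : Fin (2 * q + 1) → Fin d, ∑ k : Fin (2*q+1),
        (∑ l : Fin d, pd l (ω' (Fin.cons l (Fin.snoc i j))) x) *
          ((∏ k' ∈ Finset.univ.erase k, pd (i k') (H k') x) * pd j (pd (i k) (H k)) x))
      = ∑ k : Fin (2*q+1), ∑ j : Fin d, ∑ i : Fin (2 * q + 1) → Fin d,
        (∑ l : Fin d, pd l (ω' (Fin.cons l (Fin.snoc i j))) x) *
          ((∏ k' ∈ Finset.univ.erase k, pd (i k') (H k') x) * pd j (pd (i k) (H k)) x)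
      from (Finset.sum_congr rfl fun j _ => Finset.sum_comm).trans Finset.sum_comm]
    refine Finset.sum_eq_zero fun k _ => ?_
    have hinv : Function.Involutive
        (fun p : (Fin d) × (Fin (2*q+1) → Fin d) => (p.2 k, Function.update p.2 k p.1)) := by
      rintro ⟨j, i⟩
      simp [Function.update_idem, Function.update_self, Function.update_eq_self]
    have h := sum_antisym (ι := (Fin d) × (Fin (2*q+1) → Fin d))
      (fun p => (p.2 k, Function.update p.2 k p.1)) hinv
      (fun p => (∑ l : Fin d, pd l (ω' (Fin.cons l (Fin.snoc p.2 p.1))) x) *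
        ((∏ k' ∈ Finset.univ.erase k, pd (p.2 k') (H k') x) *
          pd p.1 (pd (p.2 k) (H k)) x)) ?_
    · rw [Fintype.sum_prod_type] at h
      simpa using h
    · rintro ⟨j, i⟩
      show (∑ l : Fin d, pd l (ω' (Fin.cons l (Fin.snoc (Function.update i k j) (i k)))) x) *
          ((∏ k' ∈ Finset.univ.erase k, pd ((Function.update i k j) k') (H k') x) *
            pd (i k) (pd ((Function.update i k j) k) (H k)) x)
        = -((∑ l : Fin d, pd l (ω' (Fin.cons l (Fin.snoc i j))) x) *
            ((∏ k' ∈ Finset.univ.erase k, pd (i k') (H k') x) * pd j (pd (i k) (H k)) x))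
      have e1 : (∑ l : Fin d, pd l (ω' (Fin.cons l (Fin.snoc (Function.update i k j) (i k)))) x)
          = -(∑ l : Fin d, pd l (ω' (Fin.cons l (Fin.snoc i j))) x) := by
        rw [← Finset.sum_neg_distrib]
        refine Finset.sum_congr rfl fun l _ => ?_
        rw [hneg2 i j l k]
        simp only [pd_neg]
      have e2 : (∏ k' ∈ Finset.univ.erase k, pd ((Function.update i k j) k') (H k') x)
          = ∏ k' ∈ Finset.univ.erase k, pd (i k') (H k') x :=
        Finset.prod_congr rfl fun k' hk' => by
          rw [Function.update_of_ne (Finset.ne_of_mem_erase hk')]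
      have e3 : pd (i k) (pd ((Function.update i k j) k) (H k)) x
          = pd j (pd (i k) (H k)) x := by
        rw [Function.update_self]
        exact pd_comm (hH k) _ _ x
      rw [e1, e2, e3]
      ring
  rw [hZ1, hZ2, add_zero]
end

section
/- In an associative algebra, the fully antisymmetrized bracket of two elements [x_1,x_2] = x_1x_2 − x_2x_1 satisfies the ordinary Jacobi identity, and this is the s=2 case of the even-bracket GJI; in general for even s the identity Σ_{σ∈S_{2s-1}} sgn(σ) [[x_{σ(1)},...,x_{σ(s)}],x_{σ(s+1)},...,x_{σ(2s-1)}] = 0 for s=4 expands into the 35-term identity over 7 elements. -/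
open Equiv
open scoped List

namespace Multibracket

variable {s n : ℕ}

def blockSegment (ρ : Perm (Fin s)) : Fin (n + 1) → List (Fin (s + n)) :=
  Fin.cons (List.ofFn fun i => Fin.castAdd n (ρ i)) fun j => [Fin.natAdd s j]

/-- The index word of the monomial of `[[y_1, …, y_s], y_{s+1}, …, y_{s+n}]` in which the outer
bracket orders its slots by `π` (slot `0` holding the inner bracket) and the inner one orders
`y_1, …, y_s` by `ρ`. -/
def blockWord (π : Perm (Fin (n + 1))) (ρ : Perm (Fin s)) : List (Fin (s + n)) :=
  (List.ofFn fun i => blockSegment ρ (π i)).flatten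

theorem blockWord_perm_finRange (π : Perm (Fin (n + 1))) (ρ : Perm (Fin s)) :
    blockWord π ρ ~ List.finRange (s + n) := by
  have h_one : (List.ofFn (blockSegment (n := n) ρ)).flatten
      = (List.ofFn fun i => Fin.castAdd n (ρ i)) ++ List.ofFn (Fin.natAdd s) := by
    simp only [List.ofFn_succ, blockSegment, Fin.cons_zero, Fin.cons_succ, List.flatten_cons]
    congr 1
    simpa [List.flatMap_def, Function.comp_def] using
      List.flatMap_singleton' (List.ofFn (Fin.natAdd s))
  calc blockWord π ρ ~ (List.ofFn (blockSegment (n := n) ρ)).flatten :=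
        (π.ofFn_comp_perm _).flatten
    _ = (List.ofFn fun i => Fin.castAdd n (ρ i)) ++ List.ofFn (Fin.natAdd s) := h_one
    _ ~ List.ofFn (Fin.castAdd n) ++ List.ofFn (Fin.natAdd s) :=
        (ρ.ofFn_comp_perm _).append_right _
    _ = List.finRange (s + n) := by rw [← List.ofFn_id, List.ofFn_add]; rfl

def blockPerm (π : Perm (Fin (n + 1))) (ρ : Perm (Fin s)) : Perm (Fin (s + n)) :=
  have hw := blockWord_perm_finRange π ρ
  (finCongr (hw.length_eq.trans (List.length_finRange))).symm.trans <|
    List.Nodup.getEquivOfForallMemList _ (hw.nodup_iff.2 (List.nodup_finRange _))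
      fun a => hw.mem_iff.2 (List.mem_finRange a)

theorem ofFn_blockPerm (π : Perm (Fin (n + 1))) (ρ : Perm (Fin s)) :
    List.ofFn (blockPerm π ρ) = blockWord π ρ :=
  List.ext_getElem (by simp [(blockWord_perm_finRange π ρ).length_eq]) fun _ _ _ => by
    simp [blockPerm]

def nestedBracketCoeff (s n : ℕ) : ℤ :=
  ∑ π : Perm (Fin (n + 1)), ∑ ρ : Perm (Fin s),
    (Perm.sign π : ℤ) * Perm.sign ρ * Perm.sign (blockPerm π ρ)

/-- Moving the block `[y_1, …, y_4]` past a single letter takes four transpositions, so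
`sign (blockPerm π ρ) = sign ρ * sign τ`, where `τ` is the order of the three letters, while
`sign π = (-1) ^ k * sign τ` for the slot `k` of the block: the four slots cancel. -/
theorem nestedBracketCoeff_four_three : nestedBracketCoeff 4 3 = 0 := by decide

variable {A : Type*} [Ring A]

theorem multibracket_cons_sum_zsmul {m : ℕ} {ι : Type*} (t : Finset ι) (c : ι → ℤ) (b : ι → A)
    (g : Fin m → A) :
    multibracket (Fin.cons (∑ j ∈ t, c j • b j) g)
      = ∑ j ∈ t, c j • multibracket (Fin.cons (b j) g) := by
  have hlin (π : Perm (Fin (m + 1))) (B : A) :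
      (List.ofFn fun i => (Fin.cons B g : Fin (m + 1) → A) (π i)).prod
        = (MultilinearMap.mkPiAlgebraFin ℤ (m + 1) A).toLinearMap (Fin.cons 0 g ∘ π) (π.symm 0)
            B := by
    rw [MultilinearMap.toLinearMap_apply, MultilinearMap.mkPiAlgebraFin_apply,
      ← Function.update_comp_equiv, Fin.update_cons_zero]
    rfl
  simp only [multibracket, hlin, map_sum, map_zsmul, Finset.smul_sum, smul_comm _ (c _)]
  exact Finset.sum_comm

theorem prod_map_blockWord (y : Fin (s + n) → A) (π : Perm (Fin (n + 1))) (ρ : Perm (Fin s)) :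
    ((blockWord π ρ).map y).prod
      = (List.ofFn fun i => (Fin.cons (List.ofFn fun k => y (Fin.castAdd n (ρ k))).prod
          (fun j => y (Fin.natAdd s j)) : Fin (n + 1) → A) (π i)).prod := by
  have hseg (k : Fin (n + 1)) : ((blockSegment ρ k).map y).prod
      = (Fin.cons (List.ofFn fun k => y (Fin.castAdd n (ρ k))).prod
          (fun j => y (Fin.natAdd s j)) : Fin (n + 1) → A) k := by
    cases k using Fin.cases <;> simp [blockSegment, List.map_ofFn, Function.comp_def]
  simp only [blockWord, List.map_flatten, List.prod_flatten, List.map_ofFn,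
    Function.comp_def, hseg]

theorem multibracket_cons_multibracket (y : Fin (s + n) → A) :
    multibracket (Fin.cons (multibracket fun i => y (Fin.castAdd n i))
        fun j => y (Fin.natAdd s j))
      = ∑ π : Perm (Fin (n + 1)), ∑ ρ : Perm (Fin s),
          ((Perm.sign π : ℤ) * Perm.sign ρ) • (List.ofFn fun i => y (blockPerm π ρ i)).prod := by
  rw [multibracket.eq_1 (fun i => y (Fin.castAdd n i)), multibracket_cons_sum_zsmul]
  simp only [multibracket, Finset.smul_sum, smul_smul]
  rw [Finset.sum_comm]
  refine Finset.sum_congr rfl fun π _ => Finset.sum_congr rfl fun ρ _ => ?_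
  rw [mul_comm (Perm.sign ρ : ℤ), ← prod_map_blockWord, ← ofFn_blockPerm, List.map_ofFn]
  rfl

theorem sum_sign_smul_prod_ofFn_comp_right {m : ℕ} (x : Fin m → A) (v : Perm (Fin m)) :
    ∑ σ : Perm (Fin m), (Perm.sign σ : ℤ) • (List.ofFn fun i => x (σ (v i))).prod
      = (Perm.sign v : ℤ) • multibracket x := by
  rw [multibracket, Finset.smul_sum, eq_comm, ← Equiv.sum_comp (Equiv.mulRight v)]
  refine Finset.sum_congr rfl fun σ _ => ?_
  rw [smul_smul, Equiv.coe_mulRight, Perm.sign_mul, Units.val_mul, mul_left_comm,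
    ← Units.val_mul, Int.units_mul_self, Units.val_one, mul_one]
  rfl

theorem sum_sign_smul_multibracket_cons_multibracket (x : Fin (s + n) → A) :
    ∑ σ : Perm (Fin (s + n)), (Perm.sign σ : ℤ) •
        multibracket (Fin.cons (multibracket fun i => x (σ (Fin.castAdd n i)))
          fun j => x (σ (Fin.natAdd s j)))
      = nestedBracketCoeff s n • multibracket x := by
  calc _ = ∑ σ : Perm (Fin (s + n)), ∑ π : Perm (Fin (n + 1)), ∑ ρ : Perm (Fin s),
          (Perm.sign σ : ℤ) • ((Perm.sign π : ℤ) * Perm.sign ρ) •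
            (List.ofFn fun i => x (σ (blockPerm π ρ i))).prod := by
        refine Finset.sum_congr rfl fun σ _ => ?_
        rw [multibracket_cons_multibracket (fun a => x (σ a))]
        simp only [Finset.smul_sum]
    _ = ∑ π : Perm (Fin (n + 1)), ∑ ρ : Perm (Fin s), ((Perm.sign π : ℤ) * Perm.sign ρ) •
          ∑ σ : Perm (Fin (s + n)), (Perm.sign σ : ℤ) •
            (List.ofFn fun i => x (σ (blockPerm π ρ i))).prod := by
        rw [Finset.sum_comm]
        refine Finset.sum_congr rfl fun π _ => ?_
        rw [Finset.sum_comm]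
        refine Finset.sum_congr rfl fun ρ _ => ?_
        rw [Finset.smul_sum]
        exact Finset.sum_congr rfl fun σ _ => smul_comm _ _ _
    _ = nestedBracketCoeff s n • multibracket x := by
        simp only [sum_sign_smul_prod_ofFn_comp_right, smul_smul, nestedBracketCoeff,
          Finset.sum_smul]

end Multibracket

/-- in an associative algebra, the antisymmetrized 2-bracket
`[x₁,x₂] = x₁x₂ - x₂x₁` satisfies the ordinary Jacobi identity (the `s = 2` case of the
even-bracket GJI), and for `s = 4` the full antisymmetrization over `7 = 4+3` elements of the
nested 4-bracket (the 35-term identity) vanishes. -/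
theorem commutator_jacobi_and_s4_GJI (A : Type*) [Ring A] :
    (∀ x y z : A,
      (x * y - y * x) * z - z * (x * y - y * x) +
        ((y * z - z * y) * x - x * (y * z - z * y)) +
        ((z * x - x * z) * y - y * (z * x - x * z)) = 0) ∧
    (∀ x : Fin (4 + 3) → A,
      ∑ σ : Equiv.Perm (Fin (4 + 3)),
        (Equiv.Perm.sign σ : ℤ) •
          multibracket
            (Fin.cons (multibracket fun i : Fin 4 => x (σ (Fin.castAdd 3 i)))
              (fun j : Fin 3 => x (σ (Fin.natAdd 4 j)))) = 0) := by
  refine ⟨fun x y z => by noncomm_ring, fun x => ?_⟩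
  rw [Multibracket.sum_sign_smul_multibracket_cons_multibracket,
    Multibracket.nestedBracketCoeff_four_three, zero_smul]
end
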